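/- arXiv:1101.4393 — 6 statements merged into one kernel-verified Lean document; each statement's English description precedes it below -/
import Mathlib

section
/- Let G be a connected graph on n vertices with maximum degree Δ₁ and second maximum degree Δ₂. Then the distance spectral radius satisfies ρ(G) ≥ √((2n−2−Δ₁)(2n−2−Δ₂)), with equality if and only if G is a regular graph of diameter at most 2. -/
open SimpleGraph Finset

/-!
Every vertex `w` is at distance at least `2` from the `n - 1 - deg w` vertices other than itself
and its neighbours, so its transmission `Tr w = ∑ⱼ d(w, j)`, the row sum of the distance matrix,
is at least `2n - 2 - deg w`, with equality iff `w` has eccentricity at most `2`. The Rayleigh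
quotient of the all-ones vector bounds `ρ` below by the average transmission, which for
`a = 2n - 2 - Δ₁ ≤ b = 2n - 2 - Δ₂` is at least `(a + (n - 1) b) / n ≥ (a + b) / 2 ≥ √(ab)`.
Equality forces `a = b` and every transmission to equal `a`: the graph is regular of diameter at
most `2`. Conversely, all row sums of such a graph equal `a`, and by Gershgorin's theorem the
largest row sum of a nonnegative matrix bounds its eigenvalues.
-/

/-- The distance matrix of a graph `G`: the `(i,j)` entry is the graph distance
between `i` and `j`, as a real number. -/
noncomputable def distMatrix {V : Type*} [Fintype V] (G : SimpleGraph V) : Matrix V V ℝ :=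
  fun i j => (G.dist i j : ℝ)

lemma distMatrix_isHermitian {V : Type*} [Fintype V] (G : SimpleGraph V) :
    (distMatrix G).IsHermitian := by
  unfold Matrix.IsHermitian
  ext i j
  simp [distMatrix, Matrix.conjTranspose_apply, SimpleGraph.dist_comm]

/-- The distance spectral radius of `G`: the largest eigenvalue of the distance matrix. -/
noncomputable def distSpectralRadius {V : Type*} [Fintype V] [DecidableEq V]
    (G : SimpleGraph V) : ℝ :=
  ⨆ i, (distMatrix_isHermitian G).eigenvalues i

/-- The distance energy of `G`: the sum of the absolute values of the eigenvalues of
the distance matrix. -/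
noncomputable def distEnergy {V : Type*} [Fintype V] [DecidableEq V]
    (G : SimpleGraph V) : ℝ :=
  ∑ i, |(distMatrix_isHermitian G).eigenvalues i|

open Matrix in
theorem Matrix.IsHermitian.dotProduct_mulVec_le_iSup_eigenvalues_mul {m : Type*} [Fintype m]
    [DecidableEq m] {A : Matrix m m ℝ} (hA : A.IsHermitian) (x : m → ℝ) :
    x ⬝ᵥ A *ᵥ x ≤ (⨆ i, hA.eigenvalues i) * (x ⬝ᵥ x) := by
  set c := ⨆ i, hA.eigenvalues i
  have hpsd : (c • 1 - A).PosSemidef := by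
    have h : c • 1 - A = Unitary.conjStarAlgAut ℝ _ hA.eigenvectorUnitary
        (c • 1 - diagonal (RCLike.ofReal ∘ hA.eigenvalues)) := by
      rw [map_sub, map_smul, map_one, ← hA.spectral_theorem]
    rw [h, Unitary.conjStarAlgAut_apply]
    refine .mul_mul_conjTranspose_same ?_ _
    rw [← diagonal_one, ← diagonal_smul, diagonal_sub, posSemidef_diagonal_iff]
    intro i
    simpa using le_ciSup (Set.finite_range _).bddAbove i
  have hx := hpsd.dotProduct_mulVec_nonneg x
  simp only [star_trivial, sub_mulVec, dotProduct_sub, smul_mulVec, one_mulVec, dotProduct_smul,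
    smul_eq_mul] at hx
  linarith

theorem Matrix.IsHermitian.iSup_eigenvalues_le_of_row_sum_le {m : Type*} [Fintype m] [DecidableEq m]
    [Nonempty m] {A : Matrix m m ℝ} (hA : A.IsHermitian) (hA₀ : ∀ i j, 0 ≤ A i j) {s : ℝ}
    (hs : ∀ i, ∑ j, A i j ≤ s) : (⨆ i, hA.eigenvalues i) ≤ s := by
  refine ciSup_le fun k => ?_
  have hk : Module.End.HasEigenvalue (Matrix.toLin' A) (hA.eigenvalues k) := by
    rw [Module.End.hasEigenvalue_iff_mem_spectrum, Matrix.spectrum_toLin']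
    exact hA.eigenvalues_mem_spectrum_real k
  obtain ⟨i, hi⟩ := eigenvalue_mem_ball hk
  rw [Metric.mem_closedBall, Real.dist_eq] at hi
  calc hA.eigenvalues k ≤ A i i + ∑ j ∈ univ.erase i, ‖A i j‖ := by
        linarith [le_abs_self (hA.eigenvalues k - A i i)]
    _ = ∑ j, A i j := by
      simp only [Real.norm_of_nonneg (hA₀ i _), add_sum_erase _ _ (mem_univ i)]
    _ ≤ s := hs i

namespace SimpleGraph

variable {V : Type*} {G : SimpleGraph V}

-- Away from `w` and its neighbours, connectivity forces `dist w j ≥ 2`.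
theorem Connected.max_dist_two [DecidableEq V] [DecidableRel G.Adj] (hG : G.Connected)
    (w j : V) :
    max (G.dist w j) 2 = G.dist w j + (if G.Adj w j then 1 else 0) + (if w = j then 2 else 0) := by
  by_cases hwj : w = j
  · subst hwj; simp
  by_cases hadj : G.Adj w j
  · simp [hadj, hwj, dist_eq_one_iff_adj.2 hadj]
  have h₀ := hG.pos_dist_of_ne hwj
  have h₁ : G.dist w j ≠ 1 := mt dist_eq_one_iff_adj.1 hadj
  simp only [hadj, hwj, if_false]
  omega

variable [Fintype V]

noncomputable def transmission (G : SimpleGraph V) (w : V) : ℕ := ∑ j, G.dist w j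

variable [DecidableEq V]

section Spectral
variable (G)

theorem sum_transmission_le_distSpectralRadius_mul_card :
    ∑ w, (G.transmission w : ℝ) ≤ distSpectralRadius G * Fintype.card V := by
  simpa [dotProduct, Matrix.mulVec, distMatrix, transmission, distSpectralRadius] using
    (distMatrix_isHermitian G).dotProduct_mulVec_le_iSup_eigenvalues_mul fun _ => 1

theorem distSpectralRadius_le_of_transmission_le [Nonempty V] {s : ℝ}
    (h : ∀ w, (G.transmission w : ℝ) ≤ s) : distSpectralRadius G ≤ s :=
  (distMatrix_isHermitian G).iSup_eigenvalues_le_of_row_sum_le (fun _ _ => Nat.cast_nonneg _)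
    fun w => by simpa [distMatrix, transmission] using h w

theorem distSpectralRadius_eq_of_transmission_eq [Nonempty V] {t : ℝ}
    (h : ∀ w, (G.transmission w : ℝ) = t) : distSpectralRadius G = t := by
  refine le_antisymm (G.distSpectralRadius_le_of_transmission_le fun w => (h w).le) ?_
  have := G.sum_transmission_le_distSpectralRadius_mul_card
  simp only [h, sum_const, card_univ, nsmul_eq_mul] at this
  exact le_of_mul_le_mul_left (by linarith) (Nat.cast_pos.2 Fintype.card_pos)

end Spectral

namespace Connected
variable [DecidableRel G.Adj]

theorem sum_max_dist_two (hG : G.Connected) (w : V) :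
    ∑ j, max (G.dist w j) 2 = G.transmission w + G.degree w + 2 := by
  simp_rw [hG.max_dist_two, sum_add_distrib, sum_boole, sum_ite_eq, if_pos (mem_univ w),
    Nat.cast_id]
  rw [← neighborFinset_eq_filter, card_neighborFinset_eq_degree, transmission]

theorem two_mul_card_le_transmission_add_degree (hG : G.Connected) (w : V) :
    2 * Fintype.card V ≤ G.transmission w + G.degree w + 2 := by
  rw [← hG.sum_max_dist_two, mul_comm, ← smul_eq_mul, ← card_univ, ← sum_const]
  exact sum_le_sum fun j _ => le_max_right _ _

theorem transmission_add_degree_eq_iff (hG : G.Connected) (w : V) :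
    G.transmission w + G.degree w + 2 = 2 * Fintype.card V ↔ ∀ j, G.dist w j ≤ 2 := by
  rw [← hG.sum_max_dist_two, mul_comm, ← smul_eq_mul, ← card_univ, ← sum_const, eq_comm,
    sum_eq_sum_iff_of_le fun j _ => le_max_right _ _]
  simp

theorem two_mul_card_sub_degree_le_transmission (hG : G.Connected) (w : V) :
    2 * (Fintype.card V : ℝ) - 2 - G.degree w ≤ G.transmission w := by
  have : 2 * (Fintype.card V : ℝ) ≤ G.transmission w + G.degree w + 2 := by
    exact_mod_cast hG.two_mul_card_le_transmission_add_degree w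
  linarith

theorem le_sum_transmission (hG : G.Connected) (u : V) {Δ : ℕ}
    (hΔ : ∀ w, w ≠ u → G.degree w ≤ Δ) :
    2 * (Fintype.card V : ℝ) - 2 - G.degree u +
        (Fintype.card V - 1) * (2 * Fintype.card V - 2 - Δ) ≤ ∑ w, (G.transmission w : ℝ) := by
  rw [← add_sum_erase _ _ (mem_univ u)]
  gcongr ?_ + ?_
  · exact hG.two_mul_card_sub_degree_le_transmission u
  · have := card_nsmul_le_sum (univ.erase u) _ _ fun w hw =>
      (hG.two_mul_card_sub_degree_le_transmission w).trans'
        (sub_le_sub_left (Nat.cast_le.2 (hΔ w (ne_of_mem_erase hw))) _)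
    rwa [card_erase_of_mem (mem_univ _), card_univ, nsmul_eq_mul,
      Nat.cast_sub (Fintype.card_pos_iff.2 ⟨u⟩), Nat.cast_one] at this

theorem isRegularOfDegree_of_sum_transmission_le (hG : G.Connected) {Δ : ℕ}
    (hΔ : ∀ w, G.degree w ≤ Δ)
    (h : ∑ w, (G.transmission w : ℝ) ≤ Fintype.card V * (2 * Fintype.card V - 2 - Δ)) :
    G.IsRegularOfDegree Δ ∧ ∀ x y, G.dist x y ≤ 2 := by
  have hle (w : V) : 2 * (Fintype.card V : ℝ) - 2 - Δ ≤ G.transmission w :=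
    (hG.two_mul_card_sub_degree_le_transmission w).trans'
      (sub_le_sub_left (Nat.cast_le.2 (hΔ w)) _)
  have heq (w : V) : (G.transmission w : ℝ) = 2 * Fintype.card V - 2 - Δ := by
    refine ((sum_eq_sum_iff_of_le fun w _ => hle w).1
      (le_antisymm (sum_le_sum fun w _ => hle w) ?_) w (mem_univ w)).symm
    rwa [sum_const, card_univ, nsmul_eq_mul]
  have hdeg (w : V) : G.degree w = Δ := by
    refine le_antisymm (hΔ w) ?_
    have := hG.two_mul_card_sub_degree_le_transmission w
    exact_mod_cast (by linarith [heq w] : (Δ : ℝ) ≤ G.degree w)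
  refine ⟨hdeg, fun x => (hG.transmission_add_degree_eq_iff x).1 ?_⟩
  rw [hdeg x]
  exact_mod_cast (by linarith [heq x] : (G.transmission x : ℝ) + Δ + 2 = 2 * Fintype.card V)

theorem distSpectralRadius_eq_of_isRegularOfDegree (hG : G.Connected) {r : ℕ}
    (hr : G.IsRegularOfDegree r) (hd : ∀ x y, G.dist x y ≤ 2) :
    distSpectralRadius G = 2 * Fintype.card V - 2 - r := by
  have : Nonempty V := hG.nonempty
  refine G.distSpectralRadius_eq_of_transmission_eq fun w => ?_
  have := (hG.transmission_add_degree_eq_iff w).2 (hd w)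
  rw [hr w] at this
  have : (G.transmission w : ℝ) + r + 2 = 2 * Fintype.card V := by exact_mod_cast this
  linarith

end Connected
end SimpleGraph

/-- **Theorem 1.** For a connected graph `G` on `n` vertices with maximum degree `Δ₁`
and second maximum degree `Δ₂`, `ρ(G) ≥ √((2n-2-Δ₁)(2n-2-Δ₂))`, with equality iff `G`
is a regular graph of diameter at most 2. -/
theorem distSpectralRadius_lower_bound_degrees {n : ℕ} (G : SimpleGraph (Fin n))
    [DecidableRel G.Adj] (hconn : G.Connected) (Δ₁ Δ₂ : ℕ) (u v : Fin n) (huv : u ≠ v)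
    (hu : G.degree u = Δ₁) (hv : G.degree v = Δ₂)
    (hmax : ∀ w, G.degree w ≤ Δ₁) (hmax2 : ∀ w, w ≠ u → G.degree w ≤ Δ₂) :
    Real.sqrt ((2 * (n : ℝ) - 2 - (Δ₁ : ℝ)) * (2 * (n : ℝ) - 2 - (Δ₂ : ℝ))) ≤
      distSpectralRadius G ∧
    (distSpectralRadius G =
        Real.sqrt ((2 * (n : ℝ) - 2 - (Δ₁ : ℝ)) * (2 * (n : ℝ) - 2 - (Δ₂ : ℝ))) ↔
      (∃ r, G.IsRegularOfDegree r) ∧ ∀ x y : Fin n, G.dist x y ≤ 2) := by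
  have hn : (2 : ℝ) ≤ n := by
    exact_mod_cast (by simpa using Fintype.one_lt_card_iff.2 ⟨u, v, huv⟩ : 1 < n)
  have hΔ₁ : (Δ₁ : ℝ) + 1 ≤ n := by
    exact_mod_cast (by simpa [hu] using G.degree_lt_card_verts u : Δ₁ < n)
  have hΔ₂ : (Δ₂ : ℝ) ≤ Δ₁ := by exact_mod_cast hv ▸ hmax v
  have hsum := hconn.le_sum_transmission u hmax2
  have hρ := G.sum_transmission_le_distSpectralRadius_mul_card
  have hreg := hconn.isRegularOfDegree_of_sum_transmission_le hmax
  simp only [Fintype.card_fin, hu] at hsum hρ hreg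
  set a : ℝ := 2 * (n : ℝ) - 2 - Δ₁
  set b : ℝ := 2 * (n : ℝ) - 2 - Δ₂
  -- averaging the transmissions: `ρ n ≥ a + (n - 1) b ≥ n (a + b) / 2`, as `a ≤ b`
  have hAM : (a + b) / 2 ≤ distSpectralRadius G := by nlinarith
  refine ⟨Real.sqrt_le_iff.2 ⟨by linarith, by nlinarith⟩, fun heq => ?_, ?_⟩
  · have hab : a = b := by
      have := (Real.le_sqrt (by linarith) (by nlinarith)).1 (heq ▸ hAM)
      nlinarith
    rw [← hab, Real.sqrt_mul_self (by linarith)] at heq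
    exact (hreg (by nlinarith)).imp_left fun h => ⟨Δ₁, h⟩
  · rintro ⟨⟨r, hr⟩, hdiam⟩
    have h₁ : Δ₁ = r := hu ▸ hr u
    have h₂ : Δ₂ = r := hv ▸ hr v
    subst h₁ h₂
    rw [hconn.distSpectralRadius_eq_of_isRegularOfDegree hr hdiam, Fintype.card_fin,
      Real.sqrt_mul_self (by linarith)]
end

section
/- Let G be a connected graph on n vertices with minimum degree δ₁, second minimum degree δ₂, and diameter d. Then ρ(G) ≤ √([dn − d(d−1)/2 − 1 − δ₁(d−1)]·[dn − d(d−1)/2 − 1 − δ₂(d−1)]), with equality if and only if G is a regular graph of diameter at most 2. -/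
/-!
Write `Tr w = ∑ⱼ dist w j` for the transmission of `w` (the row sums of the distance matrix) and
`B δ = d n - d (d - 1) / 2 - 1 - δ (d - 1)`. Counting in layers, `d n - Tr w` is the sum of the
sizes of the balls of radii `0, …, d - 1` around `w`, and each ball of radius `1 ≤ i < d` has at
least `degree w + i` vertices: it either reaches a vertex at every distance `2, …, i` or is the
whole graph, and a diametral path meets a closed neighbourhood in at most three vertices. Hence
`Tr w ≤ B (degree w)`.

For an eigenvector `x` of an eigenvalue `λ > 0`, let `|x p|` be the largest entry and `|x q|` the
largest one with `q ≠ p`. Rows `p` and `q` of the eigen-equation give `λ |x p| ≤ Tr p |x q|` and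
`λ |x q| ≤ Tr q |x p|`, so `λ² ≤ Tr p · Tr q ≤ B δ₁ · B δ₂`. In case of equality all `|x j|` agree,
so `ρ ≤ Tr w` for every `w`, which pins every degree to `δ₁` and every `Tr w` to `B δ₁`; for `d ≥ 3`
this leaves a single vertex at distance two from each vertex, which a geodesic `z₀ z₁ z₂ z₃` turns
into `degree z₀ < degree z₁`. Conversely, a regular graph of diameter at most two has constant
transmission `B r`, the eigenvalue of the all-ones vector.
-/

open SimpleGraph Finset

namespace Matrix

variable {V : Type*} [Fintype V] {A : Matrix V V ℝ} {x : V → ℝ} {μ : ℝ}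

theorem mul_abs_le_sum_mul_abs (hA : ∀ i j, 0 ≤ A i j) (h : A *ᵥ x = μ • x) (w : V) :
    μ * |x w| ≤ ∑ j, A w j * |x j| :=
  calc μ * |x w| ≤ |μ * x w| := by
        rw [abs_mul]; exact mul_le_mul_of_nonneg_right (le_abs_self μ) (abs_nonneg _)
    _ = |∑ j, A w j * x j| := by rw [← smul_eq_mul, ← Pi.smul_apply, ← h]; rfl
    _ ≤ ∑ j, |A w j * x j| := abs_sum_le_sum_abs _ _
    _ = ∑ j, A w j * |x j| := by simp_rw [abs_mul, abs_of_nonneg (hA _ _)]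

theorem sum_mul_abs_le (hA : ∀ i j, 0 ≤ A i j) (hdiag : ∀ i, A i i = 0) {w : V} {c : ℝ}
    (hc : ∀ j ≠ w, |x j| ≤ c) : ∑ j, A w j * |x j| ≤ (∑ j, A w j) * c := by
  rw [sum_mul]
  refine sum_le_sum fun j _ => ?_
  rcases eq_or_ne j w with rfl | hj
  · simp [hdiag]
  · exact mul_le_mul_of_nonneg_left (hc j hj) (hA w j)

theorem abs_eq_of_sum_mul_abs_eq (hA : ∀ i j, i ≠ j → 0 < A i j) (hdiag : ∀ i, A i i = 0)
    {w : V} {c : ℝ} (hc : ∀ j ≠ w, |x j| ≤ c) (heq : ∑ j, A w j * |x j| = (∑ j, A w j) * c) :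
    ∀ j ≠ w, |x j| = c := by
  have hgap : ∑ j, A w j * (c - |x j|) = 0 := by
    simp_rw [mul_sub, sum_sub_distrib, ← sum_mul, heq, sub_self]
  have hnonneg (j : V) (_ : j ∈ univ) : 0 ≤ A w j * (c - |x j|) := by
    rcases eq_or_ne j w with rfl | hj
    · simp [hdiag]
    · exact mul_nonneg (hA w j hj.symm).le (sub_nonneg.2 (hc j hj))
  intro j hj
  have := (sum_eq_zero_iff_of_nonneg hnonneg).1 hgap j (mem_univ j)
  rcases mul_eq_zero.1 this with h | h
  · exact absurd h (hA w j hj.symm).ne'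
  · linarith

theorem exists_abs_max_pair (hdiag : ∀ i, A i i = 0) (h : A *ᵥ x = μ • x) (hμ : μ ≠ 0)
    (hx : x ≠ 0) :
    ∃ p q, q ≠ p ∧ 0 < |x q| ∧ (∀ j, |x j| ≤ |x p|) ∧ ∀ j ≠ p, |x j| ≤ |x q| := by
  classical
  obtain ⟨j₀, hj₀⟩ := Function.ne_iff.1 hx
  obtain ⟨p, -, hp⟩ := exists_max_image univ (fun j => |x j|) ⟨j₀, mem_univ j₀⟩
  have hxp : x p ≠ 0 := abs_pos.1 ((abs_pos.2 hj₀).trans_le (hp j₀ (mem_univ j₀)))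
  obtain ⟨j, hjp, hj⟩ : ∃ j ≠ p, x j ≠ 0 := by
    by_contra! hzero
    have hrow : ∑ j, A p j * x j = μ * x p := congrFun h p
    rw [sum_eq_zero fun j _ => ?_] at hrow
    · exact mul_ne_zero hμ hxp hrow.symm
    · rcases eq_or_ne j p with rfl | hjp
      · simp [hdiag]
      · simp [hzero j hjp]
  obtain ⟨q, hq, hqmax⟩ := exists_max_image (univ.erase p) (fun j => |x j|)
    ⟨j, mem_erase.2 ⟨hjp, mem_univ j⟩⟩
  exact ⟨p, q, (mem_erase.1 hq).1,
    (abs_pos.2 hj).trans_le (hqmax j (mem_erase.2 ⟨hjp, mem_univ j⟩)),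
    fun j => hp j (mem_univ j), fun j hj => hqmax j (mem_erase.2 ⟨hj, mem_univ j⟩)⟩

theorem sq_le_sum_mul_sum (hA : ∀ i j, 0 ≤ A i j) (hdiag : ∀ i, A i i = 0)
    (h : A *ᵥ x = μ • x) (hμ : 0 ≤ μ) {p q : V} (hq₀ : 0 < |x q|) (hp : ∀ j, |x j| ≤ |x p|)
    (hq : ∀ j ≠ p, |x j| ≤ |x q|) : μ ^ 2 ≤ (∑ j, A p j) * ∑ j, A q j := by
  have hp₀ : 0 < |x p| := hq₀.trans_le (hp q)
  have h₁ := (mul_abs_le_sum_mul_abs hA h p).trans (sum_mul_abs_le hA hdiag hq)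
  have h₂ := (mul_abs_le_sum_mul_abs hA h q).trans
    (sum_mul_abs_le hA hdiag (c := |x p|) fun j _ => hp j)
  have := mul_le_mul h₁ h₂ (by positivity) ((mul_nonneg hμ hp₀.le).trans h₁)
  refine le_of_mul_le_mul_right (a := |x p| * |x q|) ?_ (by positivity)
  linarith

theorem abs_eq_of_sum_mul_sum_le_sq (hA : ∀ i j, i ≠ j → 0 < A i j) (hdiag : ∀ i, A i i = 0)
    (h : A *ᵥ x = μ • x) (hμ : 0 < μ) {p q r : V} (hrp : r ≠ p) (hrq : r ≠ q)
    (hq₀ : 0 < |x q|) (hp : ∀ j, |x j| ≤ |x p|) (hq : ∀ j ≠ p, |x j| ≤ |x q|)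
    (hle : (∑ j, A p j) * ∑ j, A q j ≤ μ ^ 2) : ∀ j, |x j| = |x q| := by
  have hA₀ (i j : V) : 0 ≤ A i j := by
    rcases eq_or_ne i j with rfl | hij
    · exact (hdiag i).ge
    · exact (hA i j hij).le
  have hp₀ : 0 < |x p| := hq₀.trans_le (hp q)
  have hRp : 0 ≤ ∑ j, A p j := sum_nonneg fun j _ => hA₀ p j
  have hRq : 0 ≤ ∑ j, A q j := sum_nonneg fun j _ => hA₀ q j
  have h₁ := mul_abs_le_sum_mul_abs hA₀ h p
  have h₂ := sum_mul_abs_le hA₀ hdiag hq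
  have h₃ := mul_abs_le_sum_mul_abs hA₀ h q
  have h₄ := sum_mul_abs_le hA₀ hdiag (w := q) (c := |x p|) fun j _ => hp j
  have hprod : (∑ j, A p j) * |x q| * ((∑ j, A q j) * |x p|) ≤
      μ * |x p| * (μ * |x q|) := by
    have := mul_le_mul_of_nonneg_right hle (mul_nonneg hp₀.le hq₀.le)
    linarith
  -- `h₁, h₂` and `h₃, h₄` are chains whose end products `hprod` reverses: each link is an equality.
  have hμp := mul_pos hμ hp₀
  have hμq := mul_pos hμ hq₀
  have heq₁ : ∑ j, A p j * |x j| = (∑ j, A p j) * |x q| := by nlinarith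
  have heq₂ : ∑ j, A q j * |x j| = (∑ j, A q j) * |x p| := by nlinarith
  have hrow₁ := abs_eq_of_sum_mul_abs_eq hA hdiag hq heq₁
  have hrow₂ := abs_eq_of_sum_mul_abs_eq hA hdiag (fun j _ => hp j) heq₂
  intro j
  rcases eq_or_ne j p with rfl | hjp
  · rw [← hrow₂ r hrq, hrow₁ r hrp]
  · exact hrow₁ j hjp

theorem IsHermitian.eigenvectorBasis_ne_zero [DecidableEq V] (hA : A.IsHermitian) (i : V) :
    ⇑(hA.eigenvectorBasis i) ≠ 0 :=
  (WithLp.ofLp_eq_zero 2).ne.2 <| hA.eigenvectorBasis.orthonormal.ne_zero i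

theorem le_sum_of_abs_eq (hA : ∀ i j, 0 ≤ A i j) (h : A *ᵥ x = μ • x) {c : ℝ} (hc : 0 < c)
    (hx : ∀ j, |x j| = c) (w : V) : μ ≤ ∑ j, A w j := by
  have := mul_abs_le_sum_mul_abs hA h w
  simp only [hx, ← sum_mul] at this
  exact le_of_mul_le_mul_right this hc

end Matrix

theorem sum_Ico_one_natCast (d : ℕ) : ∑ i ∈ Ico 1 d, (i : ℝ) = d * (d - 1) / 2 := by
  rcases Nat.eq_zero_or_pos d with rfl | hd
  · simp
  have h := congrArg (Nat.cast (R := ℝ)) (sum_range_id_mul_two d)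
  push_cast [Nat.cast_sub hd] at h
  rw [sum_Ico_eq_sub _ hd, sum_range_one, Nat.cast_zero, sub_zero]
  linarith

noncomputable def transmissionBound (n d δ : ℕ) : ℝ :=
  (d : ℝ) * n - (d : ℝ) * ((d : ℝ) - 1) / 2 - 1 - (δ : ℝ) * ((d : ℝ) - 1)

theorem transmissionBound_antitone {n d : ℕ} (hd : 1 ≤ d) : Antitone (transmissionBound n d) :=
  fun a b hab => by
    have : (1 : ℝ) ≤ d := by exact_mod_cast hd
    have : (a : ℝ) ≤ b := by exact_mod_cast hab
    unfold transmissionBound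
    nlinarith

theorem transmissionBound_strictAnti {n d : ℕ} (hd : 2 ≤ d) :
    StrictAnti (transmissionBound n d) :=
  fun a b hab => by
    have : (2 : ℝ) ≤ d := by exact_mod_cast hd
    have : (a : ℝ) < b := by exact_mod_cast hab
    unfold transmissionBound
    nlinarith

namespace SimpleGraph

variable {V : Type*} {G : SimpleGraph V}

theorem Walk.dist_getVert_le {x y : V} (p : G.Walk x y) {s t : ℕ} (hst : s ≤ t) :
    G.dist (p.getVert s) (p.getVert t) ≤ t - s := by
  have h := dist_le ((p.drop s).take (t - s))
  rw [Walk.take_length, Walk.drop_getVert, Nat.add_sub_cancel' hst] at h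
  exact h.trans (min_le_left _ _)

theorem Walk.dist_getVert_eq_of_length_eq_dist {x y : V} (p : G.Walk x y)
    (hp : p.length = G.dist x y) {s t : ℕ} (hst : s ≤ t) (ht : t ≤ p.length) :
    G.dist (p.getVert s) (p.getVert t) = t - s := by
  have hxs : G.dist x (p.getVert s) ≤ s := by simpa using p.dist_getVert_le (Nat.zero_le s)
  have hty : G.dist (p.getVert t) y ≤ p.length - t := by
    simpa using p.dist_getVert_le ht
  have := (p.drop s).reachable.dist_triangle_right x
  have := (p.drop t).reachable.dist_triangle_right (p.getVert s)
  have := p.dist_getVert_le hst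
  omega

section Finite

variable [Fintype V]

noncomputable def closedBallFinset (G : SimpleGraph V) (w : V) (i : ℕ) : Finset V :=
  {j | G.dist w j ≤ i}

@[simp]
theorem mem_closedBallFinset {w j : V} {i : ℕ} : j ∈ G.closedBallFinset w i ↔ G.dist w j ≤ i := by
  simp [closedBallFinset]

theorem card_closedBallFinset_zero (hconn : G.Connected) (w : V) :
    #(G.closedBallFinset w 0) = 1 := by
  rw [card_eq_one]
  exact ⟨w, by ext j; simp [hconn.dist_eq_zero_iff, eq_comm]⟩

theorem sum_card_closedBallFinset_add_transmission {w : V} {d : ℕ} (hw : ∀ j, G.dist w j ≤ d) :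
    ∑ i ∈ range d, #(G.closedBallFinset w i) + G.transmission w = Fintype.card V * d := by
  have hlayer (j : V) : #{i ∈ range d | G.dist w j ≤ i} = d - G.dist w j := by
    rw [show {i ∈ range d | G.dist w j ≤ i} = Ico (G.dist w j) d by ext i; simp; omega,
      Nat.card_Ico]
  calc ∑ i ∈ range d, #(G.closedBallFinset w i) + G.transmission w
      = ∑ j, ((d - G.dist w j) + G.dist w j) := by
        simp only [closedBallFinset, card_filter, transmission, ← hlayer, sum_add_distrib]
        rw [sum_comm]
    _ = Fintype.card V * d := by simp [Nat.sub_add_cancel (hw _)]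

theorem transmission_pos (hconn : G.Connected) {w w' : V} (hne : w ≠ w') :
    0 < G.transmission w :=
  (hconn.pos_dist_of_ne hne).trans_le (single_le_sum (fun _ _ => Nat.zero_le _) (mem_univ w'))

variable [DecidableRel G.Adj]

theorem card_closedBallFinset_one (hconn : G.Connected) (w : V) :
    #(G.closedBallFinset w 1) = G.degree w + 1 := by
  classical
  have : G.closedBallFinset w 1 = insert w (G.neighborFinset w) := by
    ext j
    rw [mem_closedBallFinset, mem_insert, mem_neighborFinset, ← dist_eq_one_iff_adj, eq_comm,
      ← hconn.dist_eq_zero_iff]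
    omega
  rw [this, card_insert_of_notMem (by simp), card_neighborFinset_eq_degree]

/-- A closed neighbourhood meets at most three distance layers around `x`, while a geodesic from
`x` to `y` meets every layer up to `dist x y`. -/
theorem degree_add_dist_le (hconn : G.Connected) (w x y : V) :
    G.degree w + G.dist x y ≤ Fintype.card V + 1 := by
  classical
  obtain ⟨p, hp⟩ := hconn.exists_walk_length_eq_dist x y
  have hdist (k : ℕ) (hk : k ≤ G.dist x y) : G.dist x (p.getVert k) = k := by
    simpa using p.dist_getVert_eq_of_length_eq_dist hp (Nat.zero_le k) (hp ▸ hk)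
  set c := G.dist x w
  set K := range (G.dist x y + 1) \ Icc (c - 1) (c + 1)
  have hK : G.dist x y + 1 - 3 ≤ #K :=
    le_trans (by simp only [card_range, Nat.card_Icc]; omega) (le_card_sdiff _ _)
  have hdisj : Disjoint (G.closedBallFinset w 1) (K.image p.getVert) := by
    refine Finset.disjoint_left.2 fun j hj hjK => ?_
    obtain ⟨k, hk, rfl⟩ := mem_image.1 hjK
    rw [mem_sdiff, mem_range, mem_Icc] at hk
    rw [mem_closedBallFinset] at hj
    have h1 := hconn.dist_triangle (u := x) (v := w) (w := p.getVert k)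
    have h2 := hconn.dist_triangle (u := x) (v := p.getVert k) (w := w)
    rw [dist_comm (u := p.getVert k), hdist k (by omega)] at h2
    rw [hdist k (by omega)] at h1
    omega
  have hinj : Set.InjOn p.getVert K := fun k hk l hl hkl => by
    have hk' := mem_range.1 (mem_sdiff.1 hk).1
    have hl' := mem_range.1 (mem_sdiff.1 hl).1
    rw [← hdist k (by omega), ← hdist l (by omega), hkl]
  have := card_le_univ (G.closedBallFinset w 1 ∪ K.image p.getVert)
  rw [card_union_of_disjoint hdisj, card_closedBallFinset_one hconn,
    card_image_of_injOn hinj] at this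
  omega

theorem degree_add_le_card_closedBallFinset (hconn : G.Connected) (w : V) {x y : V} {i : ℕ}
    (hi : 1 ≤ i) (hixy : i < G.dist x y) : G.degree w + i ≤ #(G.closedBallFinset w i) := by
  classical
  by_cases hfar : ∃ z, i ≤ G.dist w z
  · obtain ⟨z, hz⟩ := hfar
    obtain ⟨p, hp⟩ := hconn.exists_walk_length_eq_dist w z
    have hdist (k : ℕ) (hk : k ≤ i) : G.dist w (p.getVert k) = k := by
      simpa using p.dist_getVert_eq_of_length_eq_dist hp (Nat.zero_le k) (by omega)
    have hinj : Set.InjOn p.getVert (Icc 2 i) := fun k hk l hl hkl => by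
      rw [coe_Icc, Set.mem_Icc] at hk hl
      rw [← hdist k hk.2, ← hdist l hl.2, hkl]
    have hdisj : Disjoint (G.closedBallFinset w 1) ((Icc 2 i).image p.getVert) := by
      refine Finset.disjoint_left.2 fun j hj hjK => ?_
      obtain ⟨k, hk, rfl⟩ := mem_image.1 hjK
      rw [mem_Icc] at hk
      rw [mem_closedBallFinset, hdist k hk.2] at hj
      omega
    have hsub : G.closedBallFinset w 1 ∪ (Icc 2 i).image p.getVert ⊆ G.closedBallFinset w i := by
      intro j hj
      rcases mem_union.1 hj with hj | hj
      · exact mem_closedBallFinset.2 ((mem_closedBallFinset.1 hj).trans hi)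
      · obtain ⟨k, hk, rfl⟩ := mem_image.1 hj
        rw [mem_Icc] at hk
        exact mem_closedBallFinset.2 ((hdist k hk.2).le.trans hk.2)
    have := card_le_card hsub
    rw [card_union_of_disjoint hdisj, card_closedBallFinset_one hconn, card_image_of_injOn hinj,
      Nat.card_Icc] at this
    omega
  · push Not at hfar
    rw [eq_univ_of_forall fun j => mem_closedBallFinset.2 (hfar j).le, card_univ]
    have := degree_add_dist_le hconn w x y
    omega

theorem transmission_eq_transmissionBound_sub (hconn : G.Connected) {w : V} {d : ℕ} (hd : 1 ≤ d)
    (hw : ∀ j, G.dist w j ≤ d) :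
    (G.transmission w : ℝ) = transmissionBound (Fintype.card V) d (G.degree w) -
      ∑ i ∈ Ico 1 d, ((#(G.closedBallFinset w i) : ℝ) - (G.degree w + i)) := by
  have h := congrArg (Nat.cast (R := ℝ)) (sum_card_closedBallFinset_add_transmission hw)
  push_cast at h
  rw [range_eq_Ico, sum_eq_sum_Ico_succ_bot hd, card_closedBallFinset_zero hconn] at h
  rw [sum_sub_distrib, sum_add_distrib, sum_Ico_one_natCast, sum_const, Nat.card_Ico,
    nsmul_eq_mul, Nat.cast_sub hd, transmissionBound]
  push_cast at h ⊢
  linarith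

theorem card_closedBallFinset_sub_nonneg (hconn : G.Connected) (w : V) {x y : V} {i : ℕ}
    (hi : i ∈ Ico 1 (G.dist x y)) : 0 ≤ (#(G.closedBallFinset w i) : ℝ) - (G.degree w + i) := by
  rw [mem_Ico] at hi
  exact sub_nonneg.2 (by exact_mod_cast degree_add_le_card_closedBallFinset hconn w hi.1 hi.2)

theorem transmission_le_transmissionBound (hconn : G.Connected) {x y : V} (hxy : x ≠ y)
    (hdiam : ∀ a b, G.dist a b ≤ G.dist x y) (w : V) :
    (G.transmission w : ℝ) ≤ transmissionBound (Fintype.card V) (G.dist x y) (G.degree w) := by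
  rw [transmission_eq_transmissionBound_sub hconn (hconn.pos_dist_of_ne hxy) (hdiam w)]
  exact sub_le_self _ (sum_nonneg fun i => card_closedBallFinset_sub_nonneg hconn w)

theorem transmission_mul_le_transmissionBound_mul (hconn : G.Connected) {x y : V} (hxy : x ≠ y)
    (hdiam : ∀ a b, G.dist a b ≤ G.dist x y) {u : V} {δ₁ δ₂ : ℕ}
    (hmin : ∀ w, δ₁ ≤ G.degree w) (hmin2 : ∀ w, w ≠ u → δ₂ ≤ G.degree w) {p q : V} (hpq : p ≠ q) :
    (G.transmission p : ℝ) * G.transmission q ≤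
      transmissionBound (Fintype.card V) (G.dist x y) δ₁ *
        transmissionBound (Fintype.card V) (G.dist x y) δ₂ := by
  have hanti := transmissionBound_antitone (n := Fintype.card V) (hconn.pos_dist_of_ne hxy)
  have hTr₁ (w) := (transmission_le_transmissionBound hconn hxy hdiam w).trans (hanti (hmin w))
  have hTr₂ (w) (hw : w ≠ u) :=
    (transmission_le_transmissionBound hconn hxy hdiam w).trans (hanti (hmin2 w hw))
  rcases eq_or_ne p u with rfl | hpu
  · exact mul_le_mul (hTr₁ p) (hTr₂ q hpq.symm) (Nat.cast_nonneg _)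
      ((Nat.cast_nonneg _).trans (hTr₁ p))
  · rw [mul_comm (transmissionBound _ _ δ₁)]
    exact mul_le_mul (hTr₂ p hpu) (hTr₁ q) (Nat.cast_nonneg _)
      ((Nat.cast_nonneg _).trans (hTr₂ p hpu))

theorem card_closedBallFinset_two_le_of_transmission_eq (hconn : G.Connected) {x y : V}
    (hdiam : ∀ a b, G.dist a b ≤ G.dist x y) (h3 : 3 ≤ G.dist x y) {w : V}
    (heq : (G.transmission w : ℝ) = transmissionBound (Fintype.card V) (G.dist x y) (G.degree w)) :
    #(G.closedBallFinset w 2) ≤ G.degree w + 2 := by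
  rw [transmission_eq_transmissionBound_sub hconn (by omega) (hdiam w), sub_eq_self,
    sum_eq_zero_iff_of_nonneg fun i => card_closedBallFinset_sub_nonneg hconn w] at heq
  have := heq 2 (mem_Ico.2 ⟨by norm_num, h3⟩)
  rw [sub_eq_zero] at this
  exact_mod_cast this.le

theorem transmission_eq_transmissionBound_of_dist_le_two (hconn : G.Connected) {x y : V}
    (hxy : x ≠ y) (hdiam : ∀ a b, G.dist a b ≤ G.dist x y) (h2 : G.dist x y ≤ 2) (w : V) :
    (G.transmission w : ℝ) = transmissionBound (Fintype.card V) (G.dist x y) (G.degree w) := by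
  rw [transmission_eq_transmissionBound_sub hconn (hconn.pos_dist_of_ne hxy) (hdiam w),
    sub_eq_self]
  refine sum_eq_zero fun i hi => ?_
  obtain rfl : i = 1 := by rw [mem_Ico] at hi; omega
  rw [card_closedBallFinset_one hconn]
  push_cast
  ring

/-- If `z₃` is the only vertex at distance two from `z₁`, the neighbours of `z₀` other than `z₁`
must all be adjacent to `z₁`; together with `z₂` this makes `z₁` of larger degree. -/
theorem degree_lt_of_card_closedBallFinset_two_le (hconn : G.Connected) {z₀ z₁ z₂ z₃ : V}
    (h₀₁ : G.Adj z₀ z₁) (h₁₂ : G.Adj z₁ z₂) (h₀₂ : G.dist z₀ z₂ = 2) (h₁₃ : G.dist z₁ z₃ = 2)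
    (h₀₃ : G.dist z₀ z₃ = 3) (hball : #(G.closedBallFinset z₁ 2) ≤ G.degree z₁ + 2) :
    G.degree z₀ < G.degree z₁ := by
  classical
  have hd₀₁ : G.dist z₁ z₀ = 1 := dist_eq_one_iff_adj.2 h₀₁.symm
  have hsub : insert z₃ (G.closedBallFinset z₀ 1 ∪ G.closedBallFinset z₁ 1) ⊆
      G.closedBallFinset z₁ 2 := by
    intro j hj
    simp only [mem_insert, mem_union, mem_closedBallFinset] at hj ⊢
    rcases hj with rfl | hj
    · exact h₁₃.le
    · have := hconn.dist_triangle (u := z₁) (v := z₀) (w := j)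
      omega
  have hz₃ : z₃ ∉ G.closedBallFinset z₀ 1 ∪ G.closedBallFinset z₁ 1 := by
    simp [h₀₃, h₁₃]
  have hunion := card_le_card hsub
  rw [card_insert_of_notMem hz₃] at hunion
  have hcard₁ := card_closedBallFinset_one hconn z₁
  have hle : G.closedBallFinset z₀ 1 ⊆ G.closedBallFinset z₁ 1 :=
    union_eq_right.1 (eq_of_superset_of_card_ge subset_union_right (by omega :
      #(G.closedBallFinset z₀ 1 ∪ G.closedBallFinset z₁ 1) ≤ #(G.closedBallFinset z₁ 1)))
  have hlt : G.closedBallFinset z₀ 1 ⊂ G.closedBallFinset z₁ 1 :=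
    ssubset_of_subset_of_ne hle fun h => by
      have := mem_closedBallFinset.1 (h ▸ mem_closedBallFinset.2 (dist_eq_one_iff_adj.2 h₁₂).le)
      omega
  have := card_lt_card hlt
  rwa [card_closedBallFinset_one hconn, card_closedBallFinset_one hconn, add_lt_add_iff_right]
    at this

theorem isRegularOfDegree_of_dist_le_one (hconn : G.Connected) (h : ∀ a b, G.dist a b ≤ 1) :
    G.IsRegularOfDegree (Fintype.card V - 1) := fun w => by
  have := card_closedBallFinset_one hconn w
  rw [eq_univ_of_forall fun j => mem_closedBallFinset.2 (h w j), card_univ] at this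
  omega

theorem dist_le_two_of_isRegularOfDegree (hconn : G.Connected) {r : ℕ}
    (hreg : G.IsRegularOfDegree r) (hball : ∀ w, #(G.closedBallFinset w 2) ≤ G.degree w + 2)
    (a b : V) : G.dist a b ≤ 2 := by
  by_contra! hab
  obtain ⟨p, hp⟩ := hconn.exists_walk_length_eq_dist a b
  have hdist {s t : ℕ} (hst : s ≤ t) (ht : t ≤ 3) : G.dist (p.getVert s) (p.getVert t) = t - s :=
    p.dist_getVert_eq_of_length_eq_dist hp hst (by omega)
  have hadj {s : ℕ} (hs : s < 3) : G.Adj (p.getVert s) (p.getVert (s + 1)) :=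
    p.adj_getVert_succ (by omega)
  have := degree_lt_of_card_closedBallFinset_two_le hconn (hadj (s := 0) (by omega))
    (hadj (s := 1) (by omega)) (hdist (s := 0) (t := 2) (by omega) (by omega))
    (hdist (s := 1) (t := 3) (by omega) (by omega)) (hdist (s := 0) (t := 3) (by omega) (by omega))
    (hball _)
  rw [hreg, hreg] at this
  exact lt_irrefl _ this

end Finite

end SimpleGraph

section DistSpectralRadius

open Matrix

variable {V : Type*} [Fintype V] {G : SimpleGraph V}

theorem distMatrix_nonneg (i j : V) : 0 ≤ distMatrix G i j := Nat.cast_nonneg _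

theorem distMatrix_self (i : V) : distMatrix G i i = 0 := by simp [distMatrix]

theorem distMatrix_pos (hconn : G.Connected) {i j : V} (hij : i ≠ j) : 0 < distMatrix G i j :=
  Nat.cast_pos.2 (hconn.pos_dist_of_ne hij)

theorem sum_distMatrix_apply (w : V) : ∑ j, distMatrix G w j = G.transmission w := by
  simp [distMatrix, SimpleGraph.transmission]

variable [DecidableEq V]

theorem distSpectralRadius_le_sqrt {M : ℝ}
    (hM : ∀ p q, p ≠ q → (G.transmission p : ℝ) * G.transmission q ≤ M) :
    distSpectralRadius G ≤ √M := by
  have hD := distMatrix_isHermitian G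
  refine Real.iSup_le (fun i => ?_) (Real.sqrt_nonneg M)
  rcases le_or_gt (hD.eigenvalues i) 0 with hneg | hpos
  · exact hneg.trans (Real.sqrt_nonneg M)
  obtain ⟨p, q, hqp, hq₀, hp, hq⟩ := exists_abs_max_pair distMatrix_self
    (hD.mulVec_eigenvectorBasis i) hpos.ne' (hD.eigenvectorBasis_ne_zero i)
  have := sq_le_sum_mul_sum distMatrix_nonneg distMatrix_self (hD.mulVec_eigenvectorBasis i)
    hpos.le hq₀ hp hq
  rw [sum_distMatrix_apply, sum_distMatrix_apply] at this
  exact (le_abs_self _).trans (Real.abs_le_sqrt (this.trans (hM p q hqp.symm)))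

theorem distSpectralRadius_le_transmission (hconn : G.Connected) (hcard : 3 ≤ Fintype.card V)
    (hρ : 0 < distSpectralRadius G)
    (hM : ∀ p q, p ≠ q → (G.transmission p : ℝ) * G.transmission q ≤ distSpectralRadius G ^ 2)
    (w : V) : distSpectralRadius G ≤ G.transmission w := by
  classical
  have hD := distMatrix_isHermitian G
  have : Nonempty V := Fintype.card_pos_iff.1 (by omega)
  obtain ⟨i, hi⟩ := exists_eq_ciSup_of_finite (f := hD.eigenvalues)
  have heig := hD.mulVec_eigenvectorBasis i
  rw [hi] at heig
  obtain ⟨p, q, hqp, hq₀, hp, hq⟩ :=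
    exists_abs_max_pair distMatrix_self heig hρ.ne' (hD.eigenvectorBasis_ne_zero i)
  obtain ⟨r, -, hr⟩ := exists_mem_notMem_of_card_lt_card (s := {p, q}) (t := univ)
    ((card_le_two).trans_lt (by rw [card_univ]; omega))
  rw [mem_insert, mem_singleton, not_or] at hr
  have hall := abs_eq_of_sum_mul_sum_le_sq (fun _ _ => distMatrix_pos hconn) distMatrix_self heig
    hρ hr.1 hr.2 hq₀ hp hq
    (by rw [sum_distMatrix_apply, sum_distMatrix_apply]; exact hM p q hqp.symm)
  rw [← sum_distMatrix_apply]
  exact le_sum_of_abs_eq distMatrix_nonneg heig hq₀ hall w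

theorem le_distSpectralRadius_of_mulVec_eq_smul {v : V → ℝ} {μ : ℝ} (hv : v ≠ 0)
    (h : distMatrix G *ᵥ v = μ • v) : μ ≤ distSpectralRadius G := by
  have hμ : μ ∈ spectrum ℝ (distMatrix G) := by
    rw [← spectrum_toLin']
    exact Module.End.hasEigenvalue_of_hasEigenvector
      ⟨Module.End.mem_eigenspace_iff.2 (by rwa [toLin'_apply]), hv⟩ |>.mem_spectrum
  rw [(distMatrix_isHermitian G).spectrum_real_eq_range_eigenvalues] at hμ
  obtain ⟨i, rfl⟩ := hμ
  exact le_ciSup (Set.finite_range _).bddAbove i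

theorem le_distSpectralRadius_of_transmission_eq [Nonempty V] {c : ℝ}
    (h : ∀ w, (G.transmission w : ℝ) = c) : c ≤ distSpectralRadius G := by
  refine le_distSpectralRadius_of_mulVec_eq_smul (v := fun _ => 1) (Function.ne_iff.2 ?_) ?_
  · exact ⟨Classical.arbitrary V, one_ne_zero⟩
  · ext w
    simpa [mulVec, dotProduct, sum_distMatrix_apply] using h w

variable [DecidableRel G.Adj]

theorem isRegularOfDegree_of_distSpectralRadius_eq (hconn : G.Connected) {x y : V}
    (hxy : x ≠ y) (hdiam : ∀ a b, G.dist a b ≤ G.dist x y) (hd : 2 ≤ G.dist x y) {u v : V}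
    (huv : u ≠ v) {δ₁ δ₂ : ℕ} (hv : G.degree v = δ₂) (hmin : ∀ w, δ₁ ≤ G.degree w)
    (hmin2 : ∀ w, w ≠ u → δ₂ ≤ G.degree w)
    (hρ : distSpectralRadius G = √(transmissionBound (Fintype.card V) (G.dist x y) δ₁ *
      transmissionBound (Fintype.card V) (G.dist x y) δ₂)) :
    G.IsRegularOfDegree δ₁ ∧ ∀ w, (G.transmission w : ℝ) =
      transmissionBound (Fintype.card V) (G.dist x y) (G.degree w) := by
  set B := transmissionBound (Fintype.card V) (G.dist x y)
  have hTr := transmission_le_transmissionBound hconn hxy hdiam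
  have hanti := transmissionBound_antitone (n := Fintype.card V) (hconn.pos_dist_of_ne hxy)
  have hprod (p q : V) := transmission_mul_le_transmissionBound_mul hconn hxy hdiam hmin hmin2
    (p := p) (q := q)
  have hcard : 3 ≤ Fintype.card V := by
    obtain ⟨p, hp, hlen⟩ := hconn.exists_path_of_dist x y
    have := hp.length_lt
    omega
  have hBpos : 0 < B δ₁ * B δ₂ := by
    have := transmission_pos hconn huv
    have := transmission_pos hconn huv.symm
    have : (0 : ℝ) < G.transmission u * G.transmission v := by positivity
    linarith [hprod u v huv]
  have hρpos : 0 < distSpectralRadius G := hρ ▸ Real.sqrt_pos.2 hBpos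
  have hρsq : distSpectralRadius G ^ 2 = B δ₁ * B δ₂ := hρ ▸ Real.sq_sqrt hBpos.le
  have hρT := distSpectralRadius_le_transmission hconn hcard hρpos
    fun p q hpq => (hprod p q hpq).trans hρsq.ge
  have hB₁ : B δ₁ = distSpectralRadius G := by
    have := (hρT v).trans ((hTr v).trans (hanti (hmin2 v huv.symm)))
    have : B δ₂ ≤ B δ₁ := hanti (hv ▸ hmin v)
    nlinarith
  have hTeq (w) : (G.transmission w : ℝ) = B (G.degree w) :=
    le_antisymm (hTr w) ((hanti (hmin w)).trans (hB₁.le.trans (hρT w)))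
  exact ⟨fun w => (transmissionBound_strictAnti hd).injective
    (le_antisymm (hanti (hmin w)) (hB₁.le.trans ((hρT w).trans (hTeq w).le))), hTeq⟩

theorem distSpectralRadius_eq_transmissionBound (hconn : G.Connected) {x y : V} (hxy : x ≠ y)
    (hdiam : ∀ a b, G.dist a b ≤ G.dist x y) (hd : G.dist x y ≤ 2) {r : ℕ}
    (hreg : G.IsRegularOfDegree r) :
    distSpectralRadius G = transmissionBound (Fintype.card V) (G.dist x y) r := by
  have hT (w : V) := hreg w ▸ transmission_eq_transmissionBound_of_dist_le_two hconn hxy hdiam hd w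
  have : Nonempty V := ⟨x⟩
  refine le_antisymm ?_ (le_distSpectralRadius_of_transmission_eq hT)
  exact (distSpectralRadius_le_sqrt fun p q _ => by rw [hT p, hT q]).trans_eq
    (Real.sqrt_mul_self ((hT x) ▸ Nat.cast_nonneg _))

end DistSpectralRadius

/-- **Theorem 2.** For a connected graph `G` on `n` vertices with minimum degree `δ₁`,
second minimum degree `δ₂` and diameter `d`,
`ρ(G) ≤ √([dn - d(d-1)/2 - 1 - δ₁(d-1)]·[dn - d(d-1)/2 - 1 - δ₂(d-1)])`,
with equality iff `G` is a regular graph of diameter at most 2. -/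
theorem distSpectralRadius_upper_bound_degrees {n : ℕ} (G : SimpleGraph (Fin n))
    [DecidableRel G.Adj] (hconn : G.Connected) (δ₁ δ₂ d : ℕ) (u v : Fin n) (huv : u ≠ v)
    (hu : G.degree u = δ₁) (hv : G.degree v = δ₂)
    (hmin : ∀ w, δ₁ ≤ G.degree w) (hmin2 : ∀ w, w ≠ u → δ₂ ≤ G.degree w)
    (hdle : ∀ x y : Fin n, G.dist x y ≤ d) (hdeq : ∃ x y : Fin n, G.dist x y = d) :
    distSpectralRadius G ≤
      Real.sqrt
        (((d : ℝ) * n - (d : ℝ) * ((d : ℝ) - 1) / 2 - 1 - (δ₁ : ℝ) * ((d : ℝ) - 1)) *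
          ((d : ℝ) * n - (d : ℝ) * ((d : ℝ) - 1) / 2 - 1 - (δ₂ : ℝ) * ((d : ℝ) - 1))) ∧
    (distSpectralRadius G =
        Real.sqrt
          (((d : ℝ) * n - (d : ℝ) * ((d : ℝ) - 1) / 2 - 1 - (δ₁ : ℝ) * ((d : ℝ) - 1)) *
            ((d : ℝ) * n - (d : ℝ) * ((d : ℝ) - 1) / 2 - 1 - (δ₂ : ℝ) * ((d : ℝ) - 1))) ↔
      (∃ r, G.IsRegularOfDegree r) ∧ ∀ x y : Fin n, G.dist x y ≤ 2) := by
  obtain ⟨x, y, rfl⟩ := hdeq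
  have hxy : x ≠ y := by
    rintro rfl
    simpa using (hconn.pos_dist_of_ne huv).trans_le (hdle u v)
  rw [show (n : ℝ) = Fintype.card (Fin n) by rw [Fintype.card_fin]]
  have hprod (p q : Fin n) (hpq : p ≠ q) :=
    transmission_mul_le_transmissionBound_mul hconn hxy hdle hmin hmin2 hpq
  refine ⟨distSpectralRadius_le_sqrt hprod, fun hρ => ?_, fun ⟨⟨r, hreg⟩, hdiam⟩ => ?_⟩
  · rcases Nat.lt_or_ge (G.dist x y) 2 with hd₁ | hd₂
    · exact ⟨⟨_, isRegularOfDegree_of_dist_le_one hconn fun a b => (hdle a b).trans (by omega)⟩,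
        fun a b => (hdle a b).trans (by omega)⟩
    obtain ⟨hreg, hTeq⟩ :=
      isRegularOfDegree_of_distSpectralRadius_eq hconn hxy hdle hd₂ huv hv hmin hmin2 hρ
    refine ⟨⟨δ₁, hreg⟩, fun a b => ?_⟩
    rcases Nat.lt_or_ge (G.dist x y) 3 with hd₃ | hd₃
    · exact (hdle a b).trans (by omega)
    · exact dist_le_two_of_isRegularOfDegree hconn hreg
        (fun w => card_closedBallFinset_two_le_of_transmission_eq hconn hdle hd₃ (hTeq w)) a b
  · have hB₀ := (Nat.cast_nonneg _).trans (transmission_le_transmissionBound hconn hxy hdle u)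
    rw [← hu, ← hv, hreg u, hreg v]
    exact (distSpectralRadius_eq_transmissionBound hconn hxy hdle (hdiam x y) hreg).trans
      (Real.sqrt_mul_self (hreg u ▸ hB₀)).symm
end

section
/- Let G be a connected bipartite graph with bipartition V(G) = A ∪ B, |A| = p, |B| = q, p + q = n, and let Δ_A and Δ_B be the maximum degrees among vertices of A and of B, respectively. Then ρ(G) ≥ n − 2 + √(n² − 4pq + (3q − 2Δ_A)(3p − 2Δ_B)). -/
open SimpleGraph Finset

/-!
Take the test vector `x` equal to `a` on `A` and to `b` on `B`. Distances in a connected bipartite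
graph are at least `2` inside a part, and across the parts they are `1` on edges and at least `3`
otherwise. So `D x ≥ μ x` holds entrywise as soon as `Q (a, b) ≥ μ (a, b)` for the quotient matrix
`Q = [[2(p - 1), 3q - 2Δ_A], [3p - 2Δ_B, 2(q - 1)]]`, and for a nonnegative `x ≠ 0` the Rayleigh
quotient then gives `μ ≤ ρ(G)`. The bound is the largest eigenvalue `n - 2 + s` of `Q`, where
`s² = (p - q)² + (3q - 2Δ_A)(3p - 2Δ_B)`; its eigenvector `(3q - 2Δ_A, s + q - p)` is positive.
-/

open Matrix

namespace Matrix.IsHermitian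

variable {m : Type*} [Fintype m] [DecidableEq m] {A : Matrix m m ℝ} (hA : A.IsHermitian)

lemma dotProduct_mulVec_le_iSup_eigenvalues_mul_s4 (x : m → ℝ) :
    x ⬝ᵥ A *ᵥ x ≤ (⨆ i, hA.eigenvalues i) * (x ⬝ᵥ x) := by
  set b := hA.eigenvectorBasis
  have parseval (v w : m → ℝ) : ∑ i, (v ⬝ᵥ b i) * (b i ⬝ᵥ w) = v ⬝ᵥ w := by
    simpa [EuclideanSpace.inner_eq_star_dotProduct, dotProduct_comm]
      using b.sum_inner_mul_inner (WithLp.toLp 2 v) (WithLp.toLp 2 w)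
  have eigen (i : m) : b i ⬝ᵥ A *ᵥ x = hA.eigenvalues i * (b i ⬝ᵥ x) := by
    rw [dotProduct_mulVec, ← mulVec_transpose, ← conjTranspose_eq_transpose_of_trivial, hA.eq,
      hA.mulVec_eigenvectorBasis, smul_dotProduct, smul_eq_mul]
  rw [← parseval, ← parseval x x, Finset.mul_sum]
  refine Finset.sum_le_sum fun i _ => ?_
  rw [eigen, dotProduct_comm (b i) x]
  have : hA.eigenvalues i ≤ ⨆ j, hA.eigenvalues j := le_ciSup (Finite.bddAbove_range _) i
  nlinarith [mul_self_nonneg (x ⬝ᵥ b i)]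

lemma le_iSup_eigenvalues_of_smul_le_mulVec {μ : ℝ} {x : m → ℝ} (hx₀ : 0 ≤ x) (hx : x ≠ 0)
    (hμ : μ • x ≤ A *ᵥ x) : μ ≤ ⨆ i, hA.eigenvalues i := by
  have hxx : 0 < x ⬝ᵥ x := by simpa using dotProduct_self_star_pos_iff.mpr hx
  refine le_of_mul_le_mul_right ?_ hxx
  calc μ * (x ⬝ᵥ x) = x ⬝ᵥ μ • x := by rw [dotProduct_smul, smul_eq_mul]
    _ ≤ x ⬝ᵥ A *ᵥ x := dotProduct_le_dotProduct_of_nonneg_left hμ hx₀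
    _ ≤ _ := hA.dotProduct_mulVec_le_iSup_eigenvalues_mul_s4 x

end Matrix.IsHermitian

lemma Matrix.mulVec_ite_mem {m R : Type*} [Fintype m] [DecidableEq m]
    [NonUnitalNonAssocSemiring R] (M : Matrix m m R) {A B : Finset m} (hAB : Disjoint A B)
    (hcover : A ∪ B = univ) (a b : R) (i : m) :
    (M *ᵥ fun j => if j ∈ A then a else b) i = (∑ j ∈ A, M i j) * a + (∑ j ∈ B, M i j) * b := by
  rw [mulVec, dotProduct, ← hcover, sum_union hAB, sum_mul, sum_mul]
  congr 1 <;> refine sum_congr rfl fun j hj => ?_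
  · rw [if_pos hj]
  · rw [if_neg (disjoint_right.mp hAB hj)]

namespace SimpleGraph.IsBipartiteWith

variable {V : Type*} {G : SimpleGraph V} {u v : V}

section Parity

variable {s t : Set V}

lemma even_dist_iff (h : G.IsBipartiteWith s t) (hconn : G.Connected) (hu : u ∈ s) :
    Even (G.dist u v) ↔ v ∈ s := by
  classical
  let c : G.Coloring Bool := Coloring.mk (fun w => decide (w ∈ s)) fun {x y} hxy => by
    rcases h.mem_of_adj hxy with ⟨hx, hy⟩ | ⟨hx, hy⟩
    · simp [hx, Set.disjoint_right.mp h.disjoint hy]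
    · simp [hy, Set.disjoint_right.mp h.disjoint hx]
  obtain ⟨p, hp⟩ := hconn.exists_walk_length_eq_dist u v
  rw [← hp, c.even_length_iff_congr p]
  change (decide (u ∈ s) = true ↔ decide (v ∈ s) = true) ↔ v ∈ s
  simp [hu]

lemma two_le_dist (h : G.IsBipartiteWith s t) (hconn : G.Connected) (hu : u ∈ s) (hv : v ∈ s)
    (huv : u ≠ v) : 2 ≤ G.dist u v := by
  have hpos := hconn.pos_dist_of_ne huv
  obtain ⟨k, hk⟩ := (h.even_dist_iff hconn hu).mpr hv
  omega

lemma three_le_dist_of_not_adj (h : G.IsBipartiteWith s t) (hconn : G.Connected) (hu : u ∈ s)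
    (hv : v ∈ t) (huv : ¬ G.Adj u v) : 3 ≤ G.dist u v := by
  have hvs : v ∉ s := Set.disjoint_right.mp h.disjoint hv
  have hpos := hconn.pos_dist_of_ne (ne_of_mem_of_not_mem hu hvs)
  have hone : G.dist u v ≠ 1 := mt dist_eq_one_iff_adj.mp huv
  obtain ⟨k, hk⟩ := Nat.not_even_iff_odd.mp (mt (h.even_dist_iff hconn hu).mp hvs)
  omega

end Parity

variable {s t : Finset V} {i : V}

lemma two_mul_card_sub_one_le_sum_dist [DecidableEq V] (h : G.IsBipartiteWith s t)
    (hconn : G.Connected) (hi : i ∈ s) : 2 * ((#s : ℝ) - 1) ≤ ∑ j ∈ s, (G.dist i j : ℝ) := by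
  have hsum : ∑ j ∈ s, (if j = i then (0 : ℝ) else 2) = 2 * ((#s : ℝ) - 1) := by
    rw [sum_ite, filter_eq', filter_ne', if_pos hi, sum_const_zero, sum_const, nsmul_eq_mul,
      cast_card_erase_of_mem hi, zero_add, mul_comm]
  rw [← hsum]
  refine sum_le_sum fun j hj => ?_
  split_ifs with hji
  · positivity
  · exact_mod_cast h.two_le_dist hconn hi (mod_cast hj) (Ne.symm hji)

variable [Fintype V] [DecidableRel G.Adj]

lemma three_mul_card_sub_two_mul_degree_le_sum_dist (h : G.IsBipartiteWith s t)
    (hconn : G.Connected) (hi : i ∈ s) :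
    3 * (#t : ℝ) - 2 * G.degree i ≤ ∑ j ∈ t, (G.dist i j : ℝ) := by
  have hsum : ∑ j ∈ t, (if G.Adj i j then (1 : ℝ) else 3) = 3 * (#t : ℝ) - 2 * G.degree i := by
    rw [← card_neighborFinset_eq_degree, isBipartiteWith_neighborFinset h hi, sum_ite, sum_const,
      sum_const, ← card_filter_add_card_filter_not (s := t) (p := G.Adj i)]
    simp only [nsmul_eq_mul, Nat.cast_add]
    ring
  rw [← hsum]
  refine sum_le_sum fun j hj => ?_
  split_ifs with hij
  · simp [dist_eq_one_iff_adj.mpr hij]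
  · exact_mod_cast h.three_le_dist_of_not_adj hconn hi (mod_cast hj) hij

lemma two_mul_card_sub_one_mul_add_le_sum_dist_mul_add [DecidableEq V]
    (h : G.IsBipartiteWith s t) (hconn : G.Connected) (hi : i ∈ s) {Δ : ℕ}
    (hΔ : G.degree i ≤ Δ) {a b : ℝ} (ha : 0 ≤ a) (hb : 0 ≤ b) :
    2 * ((#s : ℝ) - 1) * a + (3 * (#t : ℝ) - 2 * Δ) * b ≤
      (∑ j ∈ s, (G.dist i j : ℝ)) * a + (∑ j ∈ t, (G.dist i j : ℝ)) * b := by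
  have hΔ' : (G.degree i : ℝ) ≤ Δ := mod_cast hΔ
  gcongr
  · exact h.two_mul_card_sub_one_le_sum_dist hconn hi
  · linarith [h.three_mul_card_sub_two_mul_degree_le_sum_dist hconn hi]

theorem le_distSpectralRadius [DecidableEq V] {A B : Finset V} (h : G.IsBipartiteWith A B)
    (hconn : G.Connected) (hcover : A ∪ B = univ) {ΔA ΔB : ℕ}
    (hΔA : ∀ v ∈ A, G.degree v ≤ ΔA) (hΔB : ∀ v ∈ B, G.degree v ≤ ΔB)
    {a b μ : ℝ} (ha : 0 < a) (hb : 0 < b)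
    (hμa : μ * a ≤ 2 * (#A - 1) * a + (3 * #B - 2 * ΔA) * b)
    (hμb : μ * b ≤ (3 * #A - 2 * ΔB) * a + 2 * (#B - 1) * b) :
    μ ≤ distSpectralRadius G := by
  have hAB : Disjoint A B := mod_cast h.disjoint
  have : Nonempty V := hconn.nonempty
  set x : V → ℝ := fun j => if j ∈ A then a else b
  have hx : ∀ j, 0 < x j := fun j => by dsimp [x]; split_ifs <;> assumption
  refine (distMatrix_isHermitian G).le_iSup_eigenvalues_of_smul_le_mulVec (fun j => (hx j).le)
    (fun h0 => (hx (Classical.arbitrary V)).ne' (congrFun h0 _)) fun i => ?_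
  rw [Pi.smul_apply, smul_eq_mul, mulVec_ite_mem _ hAB hcover]
  by_cases hi : i ∈ A
  · simp only [x, distMatrix, if_pos hi]
    linarith [h.two_mul_card_sub_one_mul_add_le_sum_dist_mul_add hconn hi (hΔA i hi) ha.le hb.le]
  · have hiB : i ∈ B := (mem_union.mp (hcover ▸ mem_univ i)).resolve_left hi
    simp only [x, distMatrix, if_neg hi]
    linarith [h.symm.two_mul_card_sub_one_mul_add_le_sum_dist_mul_add hconn hiB (hΔB i hiB)
      hb.le ha.le]

end SimpleGraph.IsBipartiteWith

/-- **Theorem 4.** For a connected bipartite graph `G` with bipartition `A ∪ B`,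
`|A| = p`, `|B| = q`, `p + q = n`, and maximum degrees `Δ_A`, `Δ_B` in `A`, `B`
respectively, `ρ(G) ≥ n - 2 + √(n² - 4pq + (3q - 2Δ_A)(3p - 2Δ_B))`. -/
theorem distSpectralRadius_bipartite_lower_bound {n : ℕ} (G : SimpleGraph (Fin n))
    [DecidableRel G.Adj] (hconn : G.Connected) (A B : Finset (Fin n)) (p q : ℕ)
    (hdisj : Disjoint A B) (hcover : A ∪ B = Finset.univ)
    (hA : A.card = p) (hB : B.card = q) (hpq : p + q = n)
    (hbip : ∀ x y : Fin n, G.Adj x y → (x ∈ A ∧ y ∈ B) ∨ (x ∈ B ∧ y ∈ A))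
    (ΔA ΔB : ℕ)
    (hΔAmem : ∃ a ∈ A, G.degree a = ΔA) (hΔAmax : ∀ a ∈ A, G.degree a ≤ ΔA)
    (hΔBmem : ∃ b ∈ B, G.degree b = ΔB) (hΔBmax : ∀ b ∈ B, G.degree b ≤ ΔB) :
    (n : ℝ) - 2 +
        Real.sqrt ((n : ℝ) ^ 2 - 4 * (p : ℝ) * (q : ℝ) +
          (3 * (q : ℝ) - 2 * (ΔA : ℝ)) * (3 * (p : ℝ) - 2 * (ΔB : ℝ))) ≤
      distSpectralRadius G := by
  have h : G.IsBipartiteWith A B := ⟨mod_cast hdisj, hbip⟩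
  obtain ⟨a₀, ha₀, rfl⟩ := hΔAmem
  obtain ⟨b₀, hb₀, rfl⟩ := hΔBmem
  have hΔA : (G.degree a₀ : ℝ) ≤ q := mod_cast hB ▸ isBipartiteWith_degree_le h ha₀
  have hΔB : (G.degree b₀ : ℝ) ≤ p := mod_cast hA ▸ isBipartiteWith_degree_le' h hb₀
  have hq : (1 : ℝ) ≤ q := mod_cast hB ▸ card_pos.mpr ⟨b₀, hb₀⟩
  have hp : (1 : ℝ) ≤ p := mod_cast hA ▸ card_pos.mpr ⟨a₀, ha₀⟩
  have hn : (n : ℝ) = p + q := mod_cast hpq.symm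
  set Ra : ℝ := 3 * q - 2 * G.degree a₀
  set Rb : ℝ := 3 * p - 2 * G.degree b₀
  have hRa : 0 < Ra := by linarith
  have hRb : 0 < Rb := by linarith
  have harg : (n : ℝ) ^ 2 - 4 * p * q + Ra * Rb = (p - q) ^ 2 + Ra * Rb := by rw [hn]; ring
  set s := Real.sqrt ((n : ℝ) ^ 2 - 4 * p * q + Ra * Rb)
  have hs : s ^ 2 = (p - q) ^ 2 + Ra * Rb := by rw [Real.sq_sqrt (harg ▸ by positivity), harg]
  have hs₀ : 0 ≤ s := Real.sqrt_nonneg _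
  have hβ : 0 < s + q - p := by nlinarith [mul_pos hRa hRb]
  refine h.le_distSpectralRadius hconn hcover hΔAmax hΔBmax hRa hβ ?_ ?_ <;> rw [hA, hB, hn]
  · linarith
  · linear_combination hs
end

section
/- Let G be a connected bipartite graph with n vertices, diameter d, and bipartition V(G) = A ∪ B with |A| = p, |B| = q, p + q = n; let δ_A and δ_B be the minimum degrees among vertices of A and of B, respectively. If d is even, then ρ(G) ≤ (d/2)(n − 1 − d/2) + (1/2)·√(d²n² + 4δ_Aδ_B(d−2)² − 4pq(2d−1) − 4(d−1)(d−2)(pδ_A + qδ_B)). -/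
open SimpleGraph Finset

open scoped Matrix

/-!
Write `d = 2c`. Take an eigenvector `y` for `ρ` and let `u ∈ A`, `v ∈ B` maximise `|y|` on
their parts. All distances from `u` into `A` are even and at most `2c`, and a shortest path from
`u` supplies vertices at distances `0, 2, 4, …`; since a diametral path forces `p, q ≥ c`, this
gives `∑_{w ∈ A} d(u, w) ≤ a₁ = 2cp - c(c + 1)`. Distances from `u` into `B` are odd, hence at
most `2c - 1`, and equal `1` at the neighbours of `u`, so `∑_{w ∈ B} d(u, w) ≤ b₁ =
(2c - 1)q - (2c - 2)δ_A`. The eigen-equation at `u` and `v` then yields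
`|ρ| |y_u| ≤ a₁ |y_u| + b₁ |y_v|` and `|ρ| |y_v| ≤ b₂ |y_u| + a₂ |y_v|`, which bound `|ρ|` by the
largest eigenvalue of the nonnegative matrix `!![a₁, b₁; b₂, a₂]`; that eigenvalue is the
right-hand side.
-/

/-- The largest eigenvalue of the nonnegative matrix `!![a₁, b₁; b₂, a₂]`. -/
noncomputable def perronRoot₂ (a₁ a₂ b₁ b₂ : ℝ) : ℝ :=
  (a₁ + a₂) / 2 + 1 / 2 * √((a₁ - a₂) ^ 2 + 4 * b₁ * b₂)

theorem le_perronRoot₂_of_mul_le {μ a₁ a₂ b₁ b₂ x y : ℝ} (hb₁ : 0 ≤ b₁) (hb₂ : 0 ≤ b₂)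
    (hxy : 0 < x + y) (h₁ : μ * x ≤ a₁ * x + b₁ * y) (h₂ : μ * y ≤ b₂ * x + a₂ * y) :
    μ ≤ perronRoot₂ a₁ a₂ b₁ b₂ := by
  set s := √((a₁ - a₂) ^ 2 + 4 * b₁ * b₂)
  have hs : s ^ 2 = (a₁ - a₂) ^ 2 + 4 * b₁ * b₂ := Real.sq_sqrt (by positivity)
  have hs_abs : |a₁ - a₂| ≤ s := Real.abs_le_sqrt (by nlinarith)
  rw [perronRoot₂]
  by_contra! hμ
  have hμ₁ : a₁ < μ := by linarith [le_abs_self (a₁ - a₂)]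
  have hμ₂ : a₂ < μ := by linarith [neg_abs_le (a₁ - a₂)]
  have hm : s / 2 < μ - (a₁ + a₂) / 2 := by linarith
  have hdet : b₁ * b₂ < (μ - a₁) * (μ - a₂) := by
    nlinarith [mul_self_lt_mul_self (by positivity : 0 ≤ s / 2) hm]
  have hx' : (μ - a₁) * (μ - a₂) * x ≤ b₁ * b₂ * x := by nlinarith
  have hy' : (μ - a₁) * (μ - a₂) * y ≤ b₁ * b₂ * y := by nlinarith
  nlinarith

theorem Finset.sum_range_card_filter_le_add_sum {α : Type*} (s : Finset α) (f : α → ℕ) {N : ℕ}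
    (hf : ∀ a ∈ s, f a ≤ N) :
    ∑ t ∈ range N, #{a ∈ s | f a ≤ t} + ∑ a ∈ s, f a = N * #s := by
  have hcount : ∀ a ∈ s, #{t ∈ range N | f a ≤ t} + f a = N := fun a ha => by
    rw [range_eq_Ico, Ico_filter_le, Nat.card_Ico]
    have := hf a ha
    omega
  calc ∑ t ∈ range N, #{a ∈ s | f a ≤ t} + ∑ a ∈ s, f a
      = ∑ a ∈ s, (#{t ∈ range N | f a ≤ t} + f a) := by
        simp only [card_filter, sum_add_distrib]
        rw [sum_comm]
    _ = N * #s := by rw [sum_congr rfl hcount, sum_const, smul_eq_mul, mul_comm]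

theorem Finset.sum_range_two_mul_div_two_add_one (c : ℕ) :
    ∑ t ∈ range (2 * c), (t / 2 + 1) = c * (c + 1) := by
  induction c with
  | zero => rfl
  | succ c ih =>
    rw [show 2 * (c + 1) = 2 * c + 1 + 1 by ring, sum_range_succ, sum_range_succ, ih]
    have h₁ : 2 * c / 2 = c := by omega
    have h₂ : (2 * c + 1) / 2 = c := by omega
    rw [h₁, h₂]
    ring

theorem Finset.sum_mul_le_of_forall_le_on_parts {ι : Type*} [Fintype ι] [DecidableEq ι]
    {A B : Finset ι} (hdisj : Disjoint A B) (hcover : A ∪ B = univ) {r z : ι → ℝ}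
    (hr : ∀ i, 0 ≤ r i) {u v : ι} (hzu : ∀ i ∈ A, z i ≤ z u) (hzv : ∀ i ∈ B, z i ≤ z v) :
    ∑ i, r i * z i ≤ (∑ i ∈ A, r i) * z u + (∑ i ∈ B, r i) * z v := by
  rw [← hcover, sum_union hdisj, sum_mul, sum_mul]
  exact add_le_add (sum_le_sum fun i hi => mul_le_mul_of_nonneg_left (hzu i hi) (hr i))
    (sum_le_sum fun i hi => mul_le_mul_of_nonneg_left (hzv i hi) (hr i))

theorem Matrix.abs_mul_abs_le_sum_mul_abs {n : Type*} [Fintype n] {M : Matrix n n ℝ}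
    (hM : ∀ i j, 0 ≤ M i j) {μ : ℝ} {y : n → ℝ} (hy : M *ᵥ y = μ • y) (i : n) :
    |μ| * |y i| ≤ ∑ j, M i j * |y j| := by
  calc |μ| * |y i| = |∑ j, M i j * y j| := by
        rw [← abs_mul, ← smul_eq_mul, ← Pi.smul_apply, ← hy]; rfl
    _ ≤ ∑ j, |M i j * y j| := abs_sum_le_sum_abs _ _
    _ = ∑ j, M i j * |y j| := by simp only [abs_mul, abs_of_nonneg (hM i _)]

theorem exists_mulVec_eq_distSpectralRadius_smul {V : Type*} [Fintype V] [DecidableEq V]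
    [Nonempty V] (G : SimpleGraph V) :
    ∃ y : V → ℝ, y ≠ 0 ∧ distMatrix G *ᵥ y = distSpectralRadius G • y := by
  have hD := distMatrix_isHermitian G
  obtain ⟨i, hi⟩ := exists_eq_ciSup_of_finite (f := hD.eigenvalues)
  refine ⟨hD.eigenvectorBasis i, ?_, ?_⟩
  · exact fun h => hD.eigenvectorBasis.orthonormal.ne_zero i (by ext j; exact congrFun h j)
  · rw [hD.mulVec_eigenvectorBasis, distSpectralRadius, ← hi]

namespace SimpleGraph

variable {V : Type*} {G : SimpleGraph V}

theorem Reachable.exists_dist_eq {u v : V} (h : G.Reachable u v) {k : ℕ}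
    (hk : k ≤ G.dist u v) : ∃ w, G.dist u w = k := by
  obtain ⟨p, hp⟩ := h.exists_walk_length_eq_dist
  refine ⟨p.getVert k, ?_⟩
  have := length_eq_dist_of_subwalk hp (p.isSubwalk_take k)
  rwa [Walk.take_length, min_eq_left (hp ▸ hk), eq_comm] at this

theorem Reachable.card_le_card_filter_dist [Fintype V] {u v : V} (h : G.Reachable u v)
    {S : Finset ℕ} (hS : ∀ k ∈ S, k ≤ G.dist u v) : #S ≤ #{w | G.dist u w ∈ S} := by
  refine card_le_card_of_surjOn (G.dist u) fun k hk => ?_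
  obtain ⟨w, hw⟩ := h.exists_dist_eq (hS k hk)
  exact ⟨w, by simpa [hw] using hk, hw⟩

theorem IsBipartiteWith.even_dist_iff_s5 {s t : Set V} (h : G.IsBipartiteWith s t) {u v : V}
    (huv : G.Reachable u v) : Even (G.dist u v) ↔ (u ∈ s ↔ v ∈ s) := by
  classical
  let c : G.Coloring Bool := Coloring.mk (fun x => decide (x ∈ s)) fun {x y} hxy => by
    rcases h.mem_of_adj hxy with ⟨hx, hy⟩ | ⟨hx, hy⟩
    · simp [hx, Set.disjoint_right.mp h.disjoint hy]
    · simp [hy, Set.disjoint_right.mp h.disjoint hx]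
  obtain ⟨p, hp⟩ := huv.exists_walk_length_eq_dist
  rw [← hp, c.even_length_iff_congr p]
  simp [c, Coloring.mk]

theorem IsBipartiteWith.odd_dist {s t : Set V} (h : G.IsBipartiteWith s t) (hconn : G.Connected)
    {u v : V} (hu : u ∈ s) (hv : v ∈ t) : Odd (G.dist u v) := by
  rw [← Nat.not_even_iff_odd, h.even_dist_iff_s5 (hconn u v)]
  simpa [hu] using Set.disjoint_right.mp h.disjoint hv

theorem IsBipartiteWith.le_card_left_of_dist_eq [Fintype V] {A B : Finset V}
    (h : G.IsBipartiteWith A B) (hconn : G.Connected) {x y : V} {c : ℕ}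
    (hxy : G.dist x y = 2 * c) : c ≤ #A := by
  classical
  -- On a shortest `x`–`y` path, the vertices at distance `2j + r` (`j < c`) lie in `A`.
  set r := if x ∈ A then 0 else 1 with hr
  have hS : #((range c).image fun j => 2 * j + r) = c := by
    rw [card_image_of_injective _ fun i j hij => by simpa using hij, card_range]
  calc c = #((range c).image fun j => 2 * j + r) := hS.symm
    _ ≤ #{w | G.dist x w ∈ (range c).image fun j => 2 * j + r} :=
      (hconn x y).card_le_card_filter_dist fun k hk => by
        obtain ⟨j, hj, rfl⟩ := mem_image.mp hk
        have : r ≤ 1 := by split_ifs at hr <;> omega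
        have := mem_range.mp hj
        omega
    _ ≤ #A := card_le_card fun w hw => by
        obtain ⟨j, -, hj⟩ := mem_image.mp (mem_filter.mp hw).2
        have hpar := hj ▸ h.even_dist_iff_s5 (hconn x w)
        by_cases hx : x ∈ A
        · simpa [hx, hr] using hpar
        · simpa [hx, hr, parity_simps] using hpar

theorem IsBipartiteWith.sum_dist_left_add_le [Fintype V] {A B : Finset V}
    (h : G.IsBipartiteWith A B) (hconn : G.Connected) {c : ℕ}
    (hdiam : ∀ x y, G.dist x y ≤ 2 * c) (hcA : c ≤ #A) {u : V} (hu : u ∈ A) :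
    ∑ w ∈ A, G.dist u w + c * (c + 1) ≤ 2 * c * #A := by
  classical
  -- The ball of radius `t` around `u` contains `u` and the vertices at distances `2, 4, …, t`
  -- on a shortest path leaving it, unless it already contains all of `A`.
  have hlevel : ∀ t ∈ range (2 * c), t / 2 + 1 ≤ #{w ∈ A | G.dist u w ≤ t} := by
    intro t ht
    have ht : t < 2 * c := mem_range.mp ht
    by_cases hfar : ∃ v, 2 * (t / 2) ≤ G.dist u v
    · obtain ⟨v, hv⟩ := hfar
      calc t / 2 + 1 = #((range (t / 2 + 1)).image (2 * ·)) := by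
            rw [card_image_of_injective _ fun i j hij => by simpa using hij, card_range]
        _ ≤ #{w | G.dist u w ∈ (range (t / 2 + 1)).image (2 * ·)} :=
          (hconn u v).card_le_card_filter_dist fun k hk => by
            obtain ⟨j, hj, rfl⟩ := mem_image.mp hk
            have := mem_range.mp hj
            omega
        _ ≤ #{w ∈ A | G.dist u w ≤ t} := card_le_card fun w hw => by
            obtain ⟨j, hj, hjw⟩ := mem_image.mp (mem_filter.mp hw).2
            have hwA : w ∈ A := by
              simpa [hu] using (h.even_dist_iff_s5 (hconn u w)).1 ⟨j, by omega⟩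
            have := mem_range.mp hj
            exact mem_filter.mpr ⟨hwA, by omega⟩
    · simp only [not_exists, not_le] at hfar
      rw [filter_true_of_mem fun w _ => by have := hfar w; omega]
      omega
  have hlayer := A.sum_range_card_filter_le_add_sum (G.dist u) fun w _ => hdiam u w
  have hsum := sum_le_sum hlevel
  rw [sum_range_two_mul_div_two_add_one] at hsum
  omega

theorem IsBipartiteWith.sum_dist_right_le [Fintype V] [DecidableRel G.Adj] {A B : Finset V}
    (h : G.IsBipartiteWith A B) (hconn : G.Connected) {c : ℕ} (hc : 1 ≤ c)
    (hdiam : ∀ x y, G.dist x y ≤ 2 * c) {u : V} (hu : u ∈ A) {δ : ℕ} (hδ : δ ≤ G.degree u) :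
    ∑ w ∈ B, (G.dist u w : ℝ) ≤ (2 * c - 1) * #B - (2 * c - 2) * δ := by
  classical
  have hN : G.neighborFinset u ⊆ B := isBipartiteWith_neighborFinset_subset h hu
  have hnear : ∑ w ∈ G.neighborFinset u, (G.dist u w : ℝ) = G.degree u := by
    rw [sum_congr rfl fun w hw => by
      rw [dist_eq_one_iff_adj.mpr ((mem_neighborFinset G u w).mp hw)]]
    simp
  have hfar : ∑ w ∈ B \ G.neighborFinset u, (G.dist u w : ℝ)
      ≤ #(B \ G.neighborFinset u) * (2 * c - 1) := by
    rw [← nsmul_eq_mul]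
    refine sum_le_card_nsmul _ _ _ fun w hw => ?_
    obtain ⟨k, hk⟩ := h.odd_dist hconn hu (mem_sdiff.mp hw).1
    have : G.dist u w + 1 ≤ 2 * c := by have := hdiam u w; omega
    have : (G.dist u w : ℝ) + 1 ≤ 2 * c := by exact_mod_cast this
    linarith
  have hcard : (#(B \ G.neighborFinset u) : ℝ) + G.degree u = #B := by
    rw [← card_neighborFinset_eq_degree]
    exact_mod_cast card_sdiff_add_card_eq_card hN
  have hc' : (1 : ℝ) ≤ c := by exact_mod_cast hc
  have hδ' : (δ : ℝ) ≤ G.degree u := by exact_mod_cast hδ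
  rw [← sum_sdiff hN, hnear]
  nlinarith

theorem IsBipartiteWith.sum_dist_mul_le [Fintype V] [DecidableEq V] [DecidableRel G.Adj]
    {A B : Finset V} (h : G.IsBipartiteWith A B) (hcover : A ∪ B = univ) (hconn : G.Connected)
    {c : ℕ} (hc : 1 ≤ c) (hdiam : ∀ x y, G.dist x y ≤ 2 * c) (hcA : c ≤ #A) {z : V → ℝ}
    (hz : ∀ w, 0 ≤ z w) {u v : V} (hu : u ∈ A) (hzu : ∀ w ∈ A, z w ≤ z u)
    (hzv : ∀ w ∈ B, z w ≤ z v) {δ : ℕ} (hδ : δ ≤ G.degree u) :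
    ∑ w, (G.dist u w : ℝ) * z w ≤
      (2 * c * #A - c * (c + 1)) * z u + ((2 * c - 1) * #B - (2 * c - 2) * δ) * z v := by
  have hA : ∑ w ∈ A, (G.dist u w : ℝ) ≤ 2 * c * #A - c * (c + 1) := by
    rw [le_sub_iff_add_le]
    exact_mod_cast h.sum_dist_left_add_le hconn hdiam hcA hu
  calc ∑ w, (G.dist u w : ℝ) * z w
      ≤ (∑ w ∈ A, (G.dist u w : ℝ)) * z u + (∑ w ∈ B, (G.dist u w : ℝ)) * z v :=
        sum_mul_le_of_forall_le_on_parts (disjoint_coe.mp h.disjoint) hcover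
          (fun w => Nat.cast_nonneg _) hzu hzv
    _ ≤ _ := add_le_add (mul_le_mul_of_nonneg_right hA (hz u))
        (mul_le_mul_of_nonneg_right (h.sum_dist_right_le hconn hc hdiam hu hδ) (hz v))

theorem IsBipartiteWith.abs_eigenvalue_le_perronRoot₂ [Fintype V] [DecidableEq V]
    [DecidableRel G.Adj] {A B : Finset V} (h : G.IsBipartiteWith A B) (hcover : A ∪ B = univ)
    (hconn : G.Connected) {c : ℕ} (hdiam : ∀ x y, G.dist x y ≤ 2 * c) (hcA : c ≤ #A)
    (hcB : c ≤ #B) (hAne : A.Nonempty) (hBne : B.Nonempty) {δA δB : ℕ} (hδA : ∀ a ∈ A, δA ≤ G.degree a)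
    (hδB : ∀ b ∈ B, δB ≤ G.degree b) {μ : ℝ} {y : V → ℝ} (hy0 : y ≠ 0)
    (hy : distMatrix G *ᵥ y = μ • y) :
    |μ| ≤ perronRoot₂ (2 * c * #A - c * (c + 1)) (2 * c * #B - c * (c + 1))
      ((2 * c - 1) * #B - (2 * c - 2) * δA) ((2 * c - 1) * #A - (2 * c - 2) * δB) := by
  obtain ⟨u, hu, hzu⟩ := A.exists_max_image (|y ·|) hAne
  obtain ⟨v, hv, hzv⟩ := B.exists_max_image (|y ·|) hBne
  have hc : 1 ≤ c := by
    have := (h.odd_dist hconn hu hv).pos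
    have := hdiam u v
    omega
  have hcover' : B ∪ A = univ := union_comm A B ▸ hcover
  have hrow := Matrix.abs_mul_abs_le_sum_mul_abs (fun i j => Nat.cast_nonneg (G.dist i j)) hy
  have hpos : 0 < |y u| + |y v| := by
    obtain ⟨i, hi⟩ := Function.ne_iff.mp hy0
    rcases mem_union.mp (hcover ▸ mem_univ i) with hiA | hiB
    · linarith [abs_pos.mpr hi, hzu i hiA, abs_nonneg (y v)]
    · linarith [abs_pos.mpr hi, hzv i hiB, abs_nonneg (y u)]
  refine le_perronRoot₂_of_mul_le
    ((sum_nonneg fun w _ => Nat.cast_nonneg _).trans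
      (h.sum_dist_right_le hconn hc hdiam hu (hδA u hu)))
    ((sum_nonneg fun w _ => Nat.cast_nonneg _).trans
      (h.symm.sum_dist_right_le hconn hc hdiam hv (hδB v hv)))
    hpos ((hrow u).trans ?_) ((hrow v).trans ?_)
  · exact h.sum_dist_mul_le hcover hconn hc hdiam hcA (fun _ => abs_nonneg _) hu hzu hzv
      (hδA u hu)
  · linarith [h.symm.sum_dist_mul_le hcover' hconn hc hdiam hcB (fun _ => abs_nonneg _) hv hzv
      hzu (hδB v hv)]

end SimpleGraph

/-- **Theorem 5 (even diameter case).** For a connected bipartite graph `G` with `n`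
vertices, even diameter `d`, bipartition `A ∪ B` with `|A| = p`, `|B| = q`,
`p + q = n`, and minimum degrees `δ_A`, `δ_B` in `A`, `B`, we have
`ρ(G) ≤ (d/2)(n-1-d/2) + (1/2)√(d²n² + 4δ_Aδ_B(d-2)² - 4pq(2d-1) - 4(d-1)(d-2)(pδ_A + qδ_B))`. -/
theorem distSpectralRadius_bipartite_upper_bound_even {n : ℕ} (G : SimpleGraph (Fin n))
    [DecidableRel G.Adj] (hconn : G.Connected) (A B : Finset (Fin n)) (p q d : ℕ)
    (hdisj : Disjoint A B) (hcover : A ∪ B = Finset.univ)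
    (hA : A.card = p) (hB : B.card = q) (hpq : p + q = n)
    (hbip : ∀ x y : Fin n, G.Adj x y → (x ∈ A ∧ y ∈ B) ∨ (x ∈ B ∧ y ∈ A))
    (hdle : ∀ x y : Fin n, G.dist x y ≤ d) (hdeq : ∃ x y : Fin n, G.dist x y = d)
    (δA δB : ℕ)
    (hδAmem : ∃ a ∈ A, G.degree a = δA) (hδAmin : ∀ a ∈ A, δA ≤ G.degree a)
    (hδBmem : ∃ b ∈ B, G.degree b = δB) (hδBmin : ∀ b ∈ B, δB ≤ G.degree b)
    (hd : Even d) :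
    distSpectralRadius G ≤
      (d : ℝ) / 2 * ((n : ℝ) - 1 - (d : ℝ) / 2) +
        1 / 2 *
          Real.sqrt ((d : ℝ) ^ 2 * (n : ℝ) ^ 2 +
            4 * (δA : ℝ) * (δB : ℝ) * ((d : ℝ) - 2) ^ 2 -
            4 * (p : ℝ) * (q : ℝ) * (2 * (d : ℝ) - 1) -
            4 * ((d : ℝ) - 1) * ((d : ℝ) - 2) * ((p : ℝ) * (δA : ℝ) + (q : ℝ) * (δB : ℝ))) := by
  obtain ⟨c, rfl⟩ := hd.two_dvd
  have hAB : G.IsBipartiteWith A B := ⟨disjoint_coe.mpr hdisj, fun x y hxy => hbip x y hxy⟩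
  obtain ⟨x, y, hxy⟩ := hdeq
  obtain ⟨a, ha, -⟩ := hδAmem
  obtain ⟨b, hb, -⟩ := hδBmem
  have : Nonempty (Fin n) := ⟨a⟩
  obtain ⟨w, hw0, hw⟩ := exists_mulVec_eq_distSpectralRadius_smul G
  have hρ := hAB.abs_eigenvalue_le_perronRoot₂ hcover hconn hdle
    (hAB.le_card_left_of_dist_eq hconn hxy) (hAB.symm.le_card_left_of_dist_eq hconn hxy)
    ⟨a, ha⟩ ⟨b, hb⟩ hδAmin hδBmin hw0 hw
  rw [hA, hB] at hρ
  refine (le_abs_self _).trans (hρ.trans_eq ?_)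
  rw [perronRoot₂, ← hpq]
  push_cast
  ring_nf
end

section
/- Let G be a connected graph with n ≥ 2 vertices and let D_i = Σ_j d_{ij} denote the i-th row sum of the distance matrix D(G). Then the distance energy satisfies DE(G) ≥ 2·√((1/n)·Σ_{i=1}^n D_i²). -/
open SimpleGraph Finset

/-! The eigenvalues of the distance matrix sum to its trace, which is zero, so each `|λᵢ|` is
at most the sum of the others, that is `|λᵢ| ≤ DE(G)/2`. Expanding in an orthonormal eigenbasis
of the symmetric matrix `D` yields `‖D x‖ ≤ (DE(G)/2) ‖x‖`. Applied to the all-ones vector, whose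
image is the vector of row sums, this gives `Σᵢ Dᵢ² ≤ n (DE(G)/2)²`. -/

theorem Finset.two_nsmul_abs_le_sum_abs_of_sum_eq_zero {ι α : Type*} [DecidableEq ι]
    [AddCommGroup α] [LinearOrder α] [IsOrderedAddMonoid α] {s : Finset ι} {f : ι → α}
    (hf : ∑ i ∈ s, f i = 0) {k : ι} (hk : k ∈ s) : 2 • |f k| ≤ ∑ i ∈ s, |f i| := by
  have hrest : ∑ i ∈ s.erase k, f i = -f k := by
    rw [← add_sum_erase s f hk, add_comm] at hf
    exact eq_neg_of_add_eq_zero_left hf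
  calc 2 • |f k| = |f k| + |∑ i ∈ s.erase k, f i| := by rw [hrest, abs_neg, two_nsmul]
    _ ≤ |f k| + ∑ i ∈ s.erase k, |f i| := add_le_add_right (abs_sum_le_sum_abs f _) _
    _ = ∑ i ∈ s, |f i| := add_sum_erase s (fun i => |f i|) hk

open Matrix in
theorem Matrix.IsHermitian.norm_toEuclideanLin_sq_le {𝕜 ι : Type*} [RCLike 𝕜] [Fintype ι]
    [DecidableEq ι] {A : Matrix ι ι 𝕜} (hA : A.IsHermitian) {c : ℝ}
    (hc : ∀ i, |hA.eigenvalues i| ≤ c) (v : EuclideanSpace 𝕜 ι) :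
    ‖toEuclideanLin A v‖ ^ 2 ≤ c ^ 2 * ‖v‖ ^ 2 := by
  set b := hA.eigenvectorBasis
  have hcoeff (i : ι) :
      ‖inner 𝕜 (b i) (toEuclideanLin A v)‖ = |hA.eigenvalues i| * ‖inner 𝕜 (b i) v‖ := by
    have heig : toEuclideanLin A (b i) = (hA.eigenvalues i : 𝕜) • b i := by
      rw [toLpLin_apply, hA.mulVec_eigenvectorBasis, RCLike.real_smul_eq_coe_smul (K := 𝕜)]
      rfl
    rw [← (isSymmetric_toEuclideanLin_iff.mpr hA) (b i) v, heig, inner_smul_left, norm_mul,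
      RCLike.norm_conj, RCLike.norm_ofReal]
  rw [← b.sum_sq_norm_inner_right, ← b.sum_sq_norm_inner_right, mul_sum]
  gcongr with i
  rw [hcoeff, mul_pow]
  gcongr
  exact hc i

section DistanceMatrix

variable {V : Type*} [Fintype V] (G : SimpleGraph V)

theorem trace_distMatrix : (distMatrix G).trace = 0 := by
  simp [Matrix.trace, distMatrix]

variable [DecidableEq V]

theorem sum_eigenvalues_distMatrix : ∑ i, (distMatrix_isHermitian G).eigenvalues i = 0 := by
  simpa [trace_distMatrix] using ((distMatrix_isHermitian G).trace_eq_sum_eigenvalues).symm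

theorem abs_eigenvalue_distMatrix_le (i : V) :
    |(distMatrix_isHermitian G).eigenvalues i| ≤ distEnergy G / 2 := by
  have h := two_nsmul_abs_le_sum_abs_of_sum_eq_zero (sum_eigenvalues_distMatrix G) (mem_univ i)
  rw [two_nsmul] at h
  unfold distEnergy
  linarith

theorem distEnergy_nonneg : 0 ≤ distEnergy G :=
  sum_nonneg fun _ _ => abs_nonneg _

theorem sum_sq_rowSum_le :
    ∑ i, (∑ j, (G.dist i j : ℝ)) ^ 2 ≤ (distEnergy G / 2) ^ 2 * Fintype.card V := by
  have hones := (distMatrix_isHermitian G).norm_toEuclideanLin_sq_le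
    (abs_eigenvalue_distMatrix_le G) (WithLp.toLp 2 fun _ => 1)
  simpa [EuclideanSpace.real_norm_sq_eq, Matrix.mulVec, dotProduct, distMatrix] using hones

theorem two_mul_sqrt_mean_sq_rowSum_le_distEnergy :
    2 * √(1 / (Fintype.card V : ℝ) * ∑ i, (∑ j, (G.dist i j : ℝ)) ^ 2) ≤ distEnergy G := by
  have hmean : 1 / (Fintype.card V : ℝ) * ∑ i, (∑ j, (G.dist i j : ℝ)) ^ 2
      ≤ (distEnergy G / 2) ^ 2 := by
    rw [one_div_mul_eq_div]
    exact div_le_of_le_mul₀ (Nat.cast_nonneg _) (sq_nonneg _) (sum_sq_rowSum_le G)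
  calc 2 * √(1 / (Fintype.card V : ℝ) * ∑ i, (∑ j, (G.dist i j : ℝ)) ^ 2)
      ≤ 2 * √((distEnergy G / 2) ^ 2) := by gcongr
    _ = distEnergy G := by rw [Real.sqrt_sq (by linarith [distEnergy_nonneg G])]; ring

end DistanceMatrix

theorem distEnergy_ge_rowSums_general {n : ℕ} (G : SimpleGraph (Fin n)) :
    2 * Real.sqrt (1 / (n : ℝ) * ∑ i : Fin n, (∑ j : Fin n, (G.dist i j : ℝ)) ^ 2) ≤
      distEnergy G := by
  simpa using two_mul_sqrt_mean_sq_rowSum_le_distEnergy G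

/-- **Theorem 6.** For a connected graph `G` with `n ≥ 2` vertices,
`DE(G) ≥ 2√((1/n)·Σᵢ Dᵢ²)`, where `Dᵢ` is the `i`-th row sum of the distance matrix. -/
theorem distEnergy_ge_rowSums {n : ℕ} (hn : 2 ≤ n) (G : SimpleGraph (Fin n))
    (hconn : G.Connected) :
    2 * Real.sqrt (1 / (n : ℝ) * ∑ i : Fin n, (∑ j : Fin n, (G.dist i j : ℝ)) ^ 2) ≤
      distEnergy G :=
  distEnergy_ge_rowSums_general G
end

section
/- Let G be a connected graph with n ≥ 2 vertices. Then DE(G) ≥ 2(n − 1), with equality if and only if G is the complete graph K_n. -/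
open SimpleGraph Finset

/-! The distance matrix has zero trace, so its eigenvalues sum to zero and the energy is at least
twice the largest eigenvalue `ρ`. Evaluating the quadratic form of `D(G)` at the all-ones vector
gives `n ρ ≥ ∑ d(u,v) ≥ n (n - 1)`, since distinct vertices of a connected graph are at distance
at least `1`; equality forces every such distance to be `1`, i.e. `G = K_n`. Conversely
`D(K_n) = J - I` has all eigenvalues `≥ -1`, which together with the zero trace bounds the energy
by `2 (n - 1)`. -/

open Matrix

namespace Finset

variable {ι : Type*} [DecidableEq ι] {s : Finset ι} {f : ι → ℝ}

lemma two_mul_abs_le_sum_abs_of_sum_eq_zero (hf : ∑ i ∈ s, f i = 0) {j : ι} (hj : j ∈ s) :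
    2 * |f j| ≤ ∑ i ∈ s, |f i| := by
  have hrest : ∑ i ∈ s.erase j, f i = -f j := by linarith [add_sum_erase s f hj]
  calc 2 * |f j| = |f j| + |∑ i ∈ s.erase j, f i| := by rw [hrest, abs_neg]; ring
    _ ≤ |f j| + ∑ i ∈ s.erase j, |f i| := by gcongr; exact abs_sum_le_sum_abs _ _
    _ = ∑ i ∈ s, |f i| := add_sum_erase s (fun i => |f i|) hj

lemma sum_abs_le_of_sum_eq_zero_of_neg_le (hs : s.Nonempty) (hf : ∑ i ∈ s, f i = 0) {c : ℝ}
    (hc : 0 ≤ c) (hfc : ∀ i ∈ s, -c ≤ f i) : ∑ i ∈ s, |f i| ≤ 2 * c * (#s - 1) := by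
  obtain ⟨j, hj, hfj⟩ : ∃ j ∈ s, 0 ≤ f j := exists_le_of_sum_le hs (by simp [hf])
  have hrest : ∑ i ∈ s.erase j, f i = -f j := by linarith [add_sum_erase s f hj]
  calc ∑ i ∈ s, |f i| = f j + ∑ i ∈ s.erase j, |f i| := by
        rw [← add_sum_erase s _ hj, abs_of_nonneg hfj]
    _ ≤ f j + ∑ i ∈ s.erase j, (f i + 2 * c) := by
        gcongr with i hi
        exact abs_le.2 ⟨by linarith [hfc i (mem_of_mem_erase hi)], by linarith⟩
    _ = 2 * c * (#s - 1) := by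
        rw [sum_add_distrib, hrest, sum_const, card_erase_of_mem hj, nsmul_eq_mul,
          Nat.cast_pred (card_pos.2 hs)]
        ring

end Finset

namespace Matrix.IsHermitian

variable {ι : Type*} [Fintype ι] [DecidableEq ι] {A : Matrix ι ι ℝ} (hA : A.IsHermitian)

lemma mulVec_dotProduct_eigenvectorBasis (x : ι → ℝ) (i : ι) :
    A *ᵥ x ⬝ᵥ hA.eigenvectorBasis i = hA.eigenvalues i * (x ⬝ᵥ hA.eigenvectorBasis i) := by
  rw [dotProduct_comm, dotProduct_mulVec, ← mulVec_transpose,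
    ← conjTranspose_eq_transpose_of_trivial, hA.eq, mulVec_eigenvectorBasis, smul_dotProduct,
    smul_eq_mul, dotProduct_comm]

lemma dotProduct_mulVec_eq_sum_eigenvalues_mul_sq (x : ι → ℝ) :
    x ⬝ᵥ A *ᵥ x = ∑ i, hA.eigenvalues i * (x ⬝ᵥ hA.eigenvectorBasis i) ^ 2 := by
  have h := hA.eigenvectorBasis.sum_inner_mul_inner (WithLp.toLp 2 x) (WithLp.toLp 2 (A *ᵥ x))
  simp only [EuclideanSpace.inner_eq_star_dotProduct, star_trivial,
    mulVec_dotProduct_eigenvectorBasis] at h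
  rw [dotProduct_comm, ← h]
  refine sum_congr rfl fun i _ => ?_
  rw [dotProduct_comm _ x]
  ring

lemma dotProduct_self_eq_sum_sq (x : ι → ℝ) :
    x ⬝ᵥ x = ∑ i, (x ⬝ᵥ hA.eigenvectorBasis i) ^ 2 := by
  have h := hA.eigenvectorBasis.sum_inner_mul_inner (WithLp.toLp 2 x) (WithLp.toLp 2 x)
  simp only [EuclideanSpace.inner_eq_star_dotProduct, star_trivial] at h
  simp only [← h, sq, dotProduct_comm x]

lemma dotProduct_eigenvectorBasis_self (i : ι) :
    ⇑(hA.eigenvectorBasis i) ⬝ᵥ ⇑(hA.eigenvectorBasis i) = 1 := by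
  have h := real_inner_self_eq_norm_sq (hA.eigenvectorBasis i)
  rwa [hA.eigenvectorBasis.orthonormal.1 i, one_pow, EuclideanSpace.inner_eq_star_dotProduct,
    star_trivial] at h

lemma dotProduct_mulVec_le_of_eigenvalues_le {c : ℝ} (hc : ∀ i, hA.eigenvalues i ≤ c)
    (x : ι → ℝ) : x ⬝ᵥ A *ᵥ x ≤ c * (x ⬝ᵥ x) := by
  rw [hA.dotProduct_mulVec_eq_sum_eigenvalues_mul_sq, hA.dotProduct_self_eq_sum_sq, mul_sum]
  gcongr with i
  exact hc i

lemma le_eigenvalues_of_le_dotProduct_mulVec {c : ℝ} (hc : ∀ x, c * (x ⬝ᵥ x) ≤ x ⬝ᵥ A *ᵥ x)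
    (i : ι) : c ≤ hA.eigenvalues i := by
  simpa [mulVec_eigenvectorBasis, hA.dotProduct_eigenvectorBasis_self] using
    hc (hA.eigenvectorBasis i)

end Matrix.IsHermitian

namespace SimpleGraph

variable {V : Type*} {G : SimpleGraph V}

lemma Connected.dist_top_le (hG : G.Connected) (u v : V) :
    (⊤ : SimpleGraph V).dist u v ≤ G.dist u v := by
  by_cases h : u = v
  · simp [h]
  · rw [dist_top_of_ne h]
    exact hG.pos_dist_of_ne h

variable [Fintype V]

lemma one_dotProduct_distMatrix_mulVec_one (G : SimpleGraph V) :
    1 ⬝ᵥ distMatrix G *ᵥ 1 = ∑ u, ∑ v, (G.dist u v : ℝ) := by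
  simp [mulVec, dotProduct, distMatrix]

lemma Connected.sum_dist_top_le (hG : G.Connected) :
    ∑ u, ∑ v, ((⊤ : SimpleGraph V).dist u v : ℝ) ≤ ∑ u, ∑ v, (G.dist u v : ℝ) :=
  sum_le_sum fun u _ => sum_le_sum fun v _ => by exact_mod_cast hG.dist_top_le u v

lemma Connected.sum_dist_eq_sum_dist_top_iff (hG : G.Connected) :
    ∑ u, ∑ v, (G.dist u v : ℝ) = ∑ u, ∑ v, ((⊤ : SimpleGraph V).dist u v : ℝ) ↔ G = ⊤ := by
  have hle (u : V) : ∀ v ∈ univ, ((⊤ : SimpleGraph V).dist u v : ℝ) ≤ G.dist u v :=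
    fun v _ => by exact_mod_cast hG.dist_top_le u v
  rw [eq_comm, sum_eq_sum_iff_of_le fun u _ => sum_le_sum (hle u)]
  simp_rw [sum_eq_sum_iff_of_le (hle _), mem_univ, true_imp_iff, Nat.cast_inj]
  constructor
  · intro h
    ext u v
    rw [← dist_eq_one_iff_adj, ← h, dist_eq_one_iff_adj]
  · rintro rfl u v
    rfl

variable [DecidableEq V]

lemma sum_eigenvalues_distMatrix (G : SimpleGraph V) :
    ∑ i, (distMatrix_isHermitian G).eigenvalues i = 0 := by
  have h := (distMatrix_isHermitian G).trace_eq_sum_eigenvalues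
  simp only [RCLike.ofReal_real_eq_id, id] at h
  simp [← h, trace, distMatrix]

lemma distMatrix_top :
    distMatrix (⊤ : SimpleGraph V) = of (fun _ _ => 1) - 1 := by
  ext u v
  by_cases h : u = v <;> simp [distMatrix, dist_top, one_apply, h]

lemma sum_dist_top [Nonempty V] :
    ∑ u, ∑ v, ((⊤ : SimpleGraph V).dist u v : ℝ) = Fintype.card V * (Fintype.card V - 1) := by
  simp [dist_top, sum_ite, filter_ne, Nat.cast_pred Fintype.card_pos]
  ring

lemma eigenvalues_distMatrix_le_distSpectralRadius (G : SimpleGraph V) (i : V) :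
    (distMatrix_isHermitian G).eigenvalues i ≤ distSpectralRadius G :=
  le_ciSup (Set.finite_range _).bddAbove i

lemma sum_dist_le_card_mul_distSpectralRadius (G : SimpleGraph V) :
    ∑ u, ∑ v, (G.dist u v : ℝ) ≤ Fintype.card V * distSpectralRadius G := by
  have h := (distMatrix_isHermitian G).dotProduct_mulVec_le_of_eigenvalues_le
    (eigenvalues_distMatrix_le_distSpectralRadius G) 1
  rwa [one_dotProduct_distMatrix_mulVec_one, one_dotProduct_one, mul_comm] at h

lemma two_mul_distSpectralRadius_le_distEnergy [Nonempty V] (G : SimpleGraph V) :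
    2 * distSpectralRadius G ≤ distEnergy G := by
  obtain ⟨i, hi⟩ := exists_eq_ciSup_of_finite (f := (distMatrix_isHermitian G).eigenvalues)
  calc 2 * distSpectralRadius G ≤ 2 * |(distMatrix_isHermitian G).eigenvalues i| := by
        rw [distSpectralRadius, ← hi]
        gcongr
        exact le_abs_self _
    _ ≤ distEnergy G :=
        two_mul_abs_le_sum_abs_of_sum_eq_zero (sum_eigenvalues_distMatrix G) (mem_univ i)

lemma Connected.card_sub_one_le_distSpectralRadius (hG : G.Connected) :
    (Fintype.card V : ℝ) - 1 ≤ distSpectralRadius G := by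
  have := hG.nonempty
  have hpos : (0 : ℝ) < Fintype.card V := by exact_mod_cast Fintype.card_pos
  refine le_of_mul_le_mul_left ?_ hpos
  calc (Fintype.card V : ℝ) * (Fintype.card V - 1) ≤ ∑ u, ∑ v, (G.dist u v : ℝ) := by
        rw [← sum_dist_top]
        exact hG.sum_dist_top_le
    _ ≤ _ := sum_dist_le_card_mul_distSpectralRadius G

lemma Connected.eq_top_of_distSpectralRadius_le (hG : G.Connected)
    (h : distSpectralRadius G ≤ Fintype.card V - 1) : G = ⊤ := by
  have := hG.nonempty
  refine hG.sum_dist_eq_sum_dist_top_iff.1 (le_antisymm ?_ hG.sum_dist_top_le)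
  calc ∑ u, ∑ v, (G.dist u v : ℝ) ≤ Fintype.card V * distSpectralRadius G :=
        sum_dist_le_card_mul_distSpectralRadius G
    _ ≤ Fintype.card V * (Fintype.card V - 1) := by gcongr
    _ = _ := sum_dist_top.symm

lemma Connected.two_mul_card_sub_one_le_distEnergy (hG : G.Connected) :
    2 * ((Fintype.card V : ℝ) - 1) ≤ distEnergy G := by
  have := hG.nonempty
  linarith [hG.card_sub_one_le_distSpectralRadius, two_mul_distSpectralRadius_le_distEnergy G]

lemma distEnergy_top_le [Nonempty V] :
    distEnergy (⊤ : SimpleGraph V) ≤ 2 * ((Fintype.card V : ℝ) - 1) := by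
  have hA := distMatrix_isHermitian (⊤ : SimpleGraph V)
  have hquad (x : V → ℝ) : -1 * (x ⬝ᵥ x) ≤ x ⬝ᵥ distMatrix ⊤ *ᵥ x := by
    have hJ : x ⬝ᵥ of (fun _ _ => (1 : ℝ)) *ᵥ x = (∑ i, x i) ^ 2 := by
      simp [dotProduct, mulVec, ← sum_mul, sq]
    rw [distMatrix_top, sub_mulVec, one_mulVec, dotProduct_sub, hJ]
    linarith [sq_nonneg (∑ i, x i)]
  have h := sum_abs_le_of_sum_eq_zero_of_neg_le univ_nonempty (sum_eigenvalues_distMatrix ⊤)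
    zero_le_one fun i _ => hA.le_eigenvalues_of_le_dotProduct_mulVec hquad i
  rwa [card_univ, mul_one] at h

lemma Connected.distEnergy_eq_iff (hG : G.Connected) :
    distEnergy G = 2 * ((Fintype.card V : ℝ) - 1) ↔ G = ⊤ := by
  have := hG.nonempty
  constructor
  · intro h
    exact hG.eq_top_of_distSpectralRadius_le
      (by linarith [two_mul_distSpectralRadius_le_distEnergy G])
  · rintro rfl
    exact le_antisymm distEnergy_top_le hG.two_mul_card_sub_one_le_distEnergy

end SimpleGraph

theorem distEnergy_ge_two_n_sub_one_general {n : ℕ} (G : SimpleGraph (Fin n))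
    (hconn : G.Connected) :
    2 * ((n : ℝ) - 1) ≤ distEnergy G ∧
    (distEnergy G = 2 * ((n : ℝ) - 1) ↔ G = (⊤ : SimpleGraph (Fin n))) := by
  simpa only [Fintype.card_fin] using And.intro hconn.two_mul_card_sub_one_le_distEnergy hconn.distEnergy_eq_iff

/-- For a connected graph `G` with `n ≥ 2` vertices, `DE(G) ≥ 2(n-1)`, with
equality if and only if `G` is the complete graph `K_n`. -/
theorem distEnergy_ge_two_n_sub_one {n : ℕ} (hn : 2 ≤ n) (G : SimpleGraph (Fin n))
    (hconn : G.Connected) :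
    2 * ((n : ℝ) - 1) ≤ distEnergy G ∧
    (distEnergy G = 2 * ((n : ℝ) - 1) ↔ G = (⊤ : SimpleGraph (Fin n))) :=
  distEnergy_ge_two_n_sub_one_general G hconn
end
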